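/- arXiv:2404.16763 — 5 statements merged into one kernel-verified Lean document; each statement's English description precedes it below -/
import Mathlib

section
/- The independence number of the third strong power of the 15-cycle satisfies α(C_15^{⊠3}) ≥ 382. -/
open SimpleGraph

/-- The fraction graph `E_{p/q}` on vertex set `ZMod p`: distinct `u, v` are adjacent
iff the representative of `u - v` or of `v - u` in `{0, …, p-1}` is strictly less than `q`. -/
def fractionGraph (p q : ℕ) : SimpleGraph (ZMod p) where
  Adj u v := u ≠ v ∧ ((u - v).val < q ∨ (v - u).val < q)
  symm := ⟨fun _ _ h => ⟨h.1.symm, h.2.symm⟩⟩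
  loopless := ⟨fun _ h => h.1 rfl⟩

/-- The cycle graph `C_n` on vertex set `ZMod n`: `i` is adjacent to `i ± 1`. -/
def cycleGraphZMod (n : ℕ) : SimpleGraph (ZMod n) where
  Adj u v := u ≠ v ∧ (u - v = 1 ∨ v - u = 1)
  symm := ⟨fun _ _ h => ⟨h.1.symm, h.2.symm⟩⟩
  loopless := ⟨fun _ h => h.1 rfl⟩

/-- The strong product of two simple graphs. -/
def strongProd {α β : Type*} (G : SimpleGraph α) (H : SimpleGraph β) :
    SimpleGraph (α × β) where
  Adj x y := x ≠ y ∧ (x.1 = y.1 ∨ G.Adj x.1 y.1) ∧ (x.2 = y.2 ∨ H.Adj x.2 y.2)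
  symm := ⟨fun _ _ h => ⟨h.1.symm, h.2.1.imp Eq.symm (fun h' => h'.symm), h.2.2.imp Eq.symm (fun h' => h'.symm)⟩⟩
  loopless := ⟨fun _ h => h.1 rfl⟩

/-- The `n`-fold strong power of a simple graph. -/
def strongPow {α : Type*} (G : SimpleGraph α) (n : ℕ) : SimpleGraph (Fin n → α) where
  Adj u v := u ≠ v ∧ ∀ i, u i = v i ∨ G.Adj (u i) (v i)
  symm := ⟨fun _ _ h => ⟨h.1.symm, fun i => (h.2 i).imp Eq.symm (fun h' => h'.symm)⟩⟩
  loopless := ⟨fun _ h => h.1 rfl⟩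

/-- The strong product of a family of simple graphs. -/
def strongProdFamily {ι : Type*} {α : ι → Type*} (G : ∀ i, SimpleGraph (α i)) :
    SimpleGraph (∀ i, α i) where
  Adj u v := u ≠ v ∧ ∀ i, u i = v i ∨ (G i).Adj (u i) (v i)
  symm := ⟨fun _ _ h => ⟨h.1.symm, fun i => (h.2 i).imp Eq.symm (fun h' => h'.symm)⟩⟩
  loopless := ⟨fun _ h => h.1 rfl⟩

/-- A finset of vertices is independent if its elements are pairwise non-adjacent. -/
def IsIndepFinset {α : Type*} (G : SimpleGraph α) (s : Finset α) : Prop :=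
  ∀ u ∈ s, ∀ v ∈ s, u ≠ v → ¬ G.Adj u v

/-- The independence number of a graph: the greatest cardinality of an independent set. -/
noncomputable def indepNum {α : Type*} (G : SimpleGraph α) : ℕ :=
  sSup {n : ℕ | ∃ s : Finset α, IsIndepFinset G s ∧ s.card = n}

/-- A cohomomorphism from `G` to `H`: a map sending distinct non-adjacent vertices
to distinct non-adjacent vertices. -/
def IsCohom {α β : Type*} (G : SimpleGraph α) (H : SimpleGraph β) (f : α → β) : Prop :=
  ∀ u v, u ≠ v → ¬ G.Adj u v → f u ≠ f v ∧ ¬ H.Adj (f u) (f v)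

/-- Disjoint union of two simple graphs. -/
def disjUnion {α β : Type*} (G : SimpleGraph α) (H : SimpleGraph β) :
    SimpleGraph (α ⊕ β) where
  Adj x y := (∃ a b, x = Sum.inl a ∧ y = Sum.inl b ∧ G.Adj a b) ∨
             (∃ a b, x = Sum.inr a ∧ y = Sum.inr b ∧ H.Adj a b)
  symm := by
    refine ⟨?_⟩
    rintro x y (⟨a, b, rfl, rfl, h⟩ | ⟨a, b, rfl, rfl, h⟩)
    · exact Or.inl ⟨b, a, rfl, rfl, h.symm⟩
    · exact Or.inr ⟨b, a, rfl, rfl, h.symm⟩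
  loopless := by
    refine ⟨?_⟩
    rintro x (⟨a, b, rfl, heq, h⟩ | ⟨a, b, rfl, heq, h⟩) <;>
      · injection heq with h'
        subst h'
        exact h.ne rfl

/-- The open circle graph `E_r^o` on the circle `ℝ/ℤ`: distinct points are adjacent
iff their distance is strictly less than `1/r`. -/
noncomputable def openCircleGraph (r : ℝ) : SimpleGraph (AddCircle (1 : ℝ)) where
  Adj x y := x ≠ y ∧ dist x y < 1 / r
  symm := ⟨fun x y h => ⟨h.1.symm, (dist_comm y x).trans_lt h.2⟩⟩
  loopless := ⟨fun _ h => h.1 rfl⟩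

/-- The closed circle graph `E_r^c` on the circle `ℝ/ℤ`: distinct points are adjacent
iff their distance is at most `1/r`. -/
noncomputable def closedCircleGraph (r : ℝ) : SimpleGraph (AddCircle (1 : ℝ)) where
  Adj x y := x ≠ y ∧ dist x y ≤ 1 / r
  symm := ⟨fun x y h => ⟨h.1.symm, (dist_comm y x).trans_le h.2⟩⟩
  loopless := ⟨fun _ h => h.1 rfl⟩

/-- The Shannon capacity `Θ(G) = sup_{n ≥ 1} α(G^{⊠n})^{1/n}`. -/
noncomputable def shannonCapacity {α : Type*} (G : SimpleGraph α) : ℝ :=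
  ⨆ n : ℕ+, (_root_.indepNum (strongPow G n) : ℝ) ^ (((n : ℕ) : ℝ)⁻¹)

/-! ### Auxiliary material for the proof -/

instance cycAdjDec : DecidableRel (cycleGraphZMod 15).Adj :=
  fun u v => inferInstanceAs (Decidable (u ≠ v ∧ (u - v = 1 ∨ v - u = 1)))

instance strongPowAdjDec : DecidableRel (strongPow (cycleGraphZMod 15) 3).Adj :=
  fun u v => inferInstanceAs
    (Decidable (u ≠ v ∧ ∀ i, u i = v i ∨ (cycleGraphZMod 15).Adj (u i) (v i)))

/-- Boolean test: `a` and `b` are at circular distance at least 2 on `ZMod 15`. -/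
def farB (a b : ZMod 15) : Bool := decide (1 < (a - b).val ∧ (a - b).val < 14)

lemma farB_spec : ∀ a b : ZMod 15, farB a b = true → a ≠ b ∧ ¬ (cycleGraphZMod 15).Adj a b := by
  decide

/-- Boolean test: some coordinate is circularly far. -/
def goodB (u v : Fin 3 → ZMod 15) : Bool :=
  farB (u 0) (v 0) || farB (u 1) (v 1) || farB (u 2) (v 2)

lemma goodB_spec {u v : Fin 3 → ZMod 15} (h : goodB u v = true) :
    u ≠ v ∧ ¬ (strongPow (cycleGraphZMod 15) 3).Adj u v := by
  have : farB (u 0) (v 0) = true ∨ farB (u 1) (v 1) = true ∨ farB (u 2) (v 2) = true := by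
    simpa [goodB, Bool.or_eq_true, or_assoc] using h
  obtain ⟨i, hi⟩ : ∃ i : Fin 3, farB (u i) (v i) = true := by
    rcases this with h | h | h
    exacts [⟨0, h⟩, ⟨1, h⟩, ⟨2, h⟩]
  have hspec := farB_spec _ _ hi
  refine ⟨fun hh => hspec.1 (by rw [hh]), fun hadj => ?_⟩
  rcases hadj.2 i with h' | h'
  · exact hspec.1 h'
  · exact hspec.2 h'

/-- An explicit list of 382 pairwise non-adjacent vertices of `C_15^{⊠3}`. -/
def indepList : List (Fin 3 → ZMod 15) := [
  ![0,0,1],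
  ![0,0,14],
  ![0,1,5],
  ![0,1,9],
  ![0,2,0],
  ![0,2,13],
  ![0,3,4],
  ![0,3,8],
  ![0,4,12],
  ![0,4,14],
  ![0,5,3],
  ![0,5,5],
  ![0,5,7],
  ![0,6,11],
  ![0,6,13],
  ![0,7,2],
  ![0,7,4],
  ![0,8,11],
  ![0,8,13],
  ![0,9,2],
  ![0,9,4],
  ![0,10,8],
  ![0,10,10],
  ![0,10,12],
  ![0,11,1],
  ![0,11,3],
  ![0,12,7],
  ![0,12,11],
  ![0,13,0],
  ![0,13,2],
  ![0,14,6],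
  ![0,14,10],
  ![1,0,12],
  ![1,1,3],
  ![1,1,7],
  ![1,2,11],
  ![1,3,2],
  ![1,3,6],
  ![1,4,10],
  ![1,5,1],
  ![1,6,9],
  ![1,7,0],
  ![1,8,6],
  ![1,8,9],
  ![1,9,0],
  ![1,10,6],
  ![1,11,14],
  ![1,12,5],
  ![1,12,9],
  ![1,13,13],
  ![1,14,4],
  ![1,14,8],
  ![2,0,10],
  ![2,0,14],
  ![2,1,1],
  ![2,1,5],
  ![2,2,9],
  ![2,2,13],
  ![2,3,0],
  ![2,3,4],
  ![2,4,8],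
  ![2,5,3],
  ![2,5,12],
  ![2,5,14],
  ![2,6,5],
  ![2,6,7],
  ![2,7,2],
  ![2,7,13],
  ![2,8,4],
  ![2,9,2],
  ![2,9,11],
  ![2,9,13],
  ![2,10,4],
  ![2,10,8],
  ![2,11,1],
  ![2,11,12],
  ![2,12,3],
  ![2,12,7],
  ![2,13,0],
  ![2,13,11],
  ![2,14,2],
  ![2,14,6],
  ![3,0,8],
  ![3,0,12],
  ![3,1,3],
  ![3,2,7],
  ![3,2,11],
  ![3,3,2],
  ![3,4,6],
  ![3,4,10],
  ![3,5,1],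
  ![3,6,9],
  ![3,7,0],
  ![3,7,11],
  ![3,8,6],
  ![3,8,9],
  ![3,9,0],
  ![3,10,6],
  ![3,11,10],
  ![3,11,14],
  ![3,12,5],
  ![3,13,9],
  ![3,13,13],
  ![3,14,4],
  ![4,0,6],
  ![4,0,10],
  ![4,1,1],
  ![4,1,14],
  ![4,2,5],
  ![4,2,9],
  ![4,3,0],
  ![4,3,13],
  ![4,4,4],
  ![4,4,8],
  ![4,5,12],
  ![4,5,14],
  ![4,6,3],
  ![4,6,5],
  ![4,6,7],
  ![4,7,13],
  ![4,8,2],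
  ![4,8,4],
  ![4,9,13],
  ![4,10,2],
  ![4,10,4],
  ![4,11,8],
  ![4,11,12],
  ![4,12,3],
  ![4,13,7],
  ![4,13,11],
  ![4,14,0],
  ![4,14,2],
  ![5,0,4],
  ![5,0,8],
  ![5,1,12],
  ![5,2,3],
  ![5,2,7],
  ![5,3,11],
  ![5,4,2],
  ![5,4,6],
  ![5,5,10],
  ![5,6,1],
  ![5,7,9],
  ![5,7,11],
  ![5,8,0],
  ![5,9,7],
  ![5,9,9],
  ![5,9,11],
  ![5,10,0],
  ![5,11,6],
  ![5,11,10],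
  ![5,12,1],
  ![5,12,14],
  ![5,13,5],
  ![5,13,9],
  ![5,14,13],
  ![6,0,0],
  ![6,0,2],
  ![6,0,6],
  ![6,1,10],
  ![6,2,1],
  ![6,2,5],
  ![6,2,14],
  ![6,3,9],
  ![6,4,0],
  ![6,4,4],
  ![6,5,8],
  ![6,6,3],
  ![6,6,14],
  ![6,7,5],
  ![6,7,7],
  ![6,8,3],
  ![6,8,13],
  ![6,9,5],
  ![6,10,2],
  ![6,10,13],
  ![6,11,4],
  ![6,11,8],
  ![6,12,12],
  ![6,13,3],
  ![6,13,7],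
  ![6,14,11],
  ![7,0,4],
  ![7,0,13],
  ![7,1,8],
  ![7,2,3],
  ![7,2,12],
  ![7,3,7],
  ![7,4,2],
  ![7,4,11],
  ![7,4,13],
  ![7,5,6],
  ![7,6,1],
  ![7,6,10],
  ![7,6,12],
  ![7,8,1],
  ![7,8,9],
  ![7,8,11],
  ![7,9,7],
  ![7,10,11],
  ![7,11,0],
  ![7,11,6],
  ![7,12,10],
  ![7,13,1],
  ![7,13,5],
  ![7,13,14],
  ![7,14,9],
  ![8,0,2],
  ![8,0,11],
  ![8,1,6],
  ![8,2,1],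
  ![8,2,10],
  ![8,2,14],
  ![8,3,5],
  ![8,4,0],
  ![8,4,9],
  ![8,5,4],
  ![8,6,8],
  ![8,7,4],
  ![8,7,6],
  ![8,7,14],
  ![8,9,3],
  ![8,9,5],
  ![8,9,14],
  ![8,10,9],
  ![8,11,2],
  ![8,11,4],
  ![8,11,13],
  ![8,12,8],
  ![8,13,3],
  ![8,13,12],
  ![8,14,7],
  ![9,0,0],
  ![9,0,9],
  ![9,0,13],
  ![9,1,4],
  ![9,2,8],
  ![9,2,12],
  ![9,3,3],
  ![9,4,7],
  ![9,4,11],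
  ![9,5,2],
  ![9,5,13],
  ![9,6,10],
  ![9,7,2],
  ![9,7,12],
  ![9,8,8],
  ![9,8,10],
  ![9,9,1],
  ![9,9,12],
  ![9,10,7],
  ![9,11,0],
  ![9,11,11],
  ![9,12,6],
  ![9,13,1],
  ![9,13,10],
  ![9,13,14],
  ![9,14,5],
  ![10,0,7],
  ![10,0,11],
  ![10,1,2],
  ![10,2,6],
  ![10,2,10],
  ![10,3,1],
  ![10,3,14],
  ![10,4,5],
  ![10,4,9],
  ![10,5,0],
  ![10,6,4],
  ![10,6,6],
  ![10,6,8],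
  ![10,7,0],
  ![10,8,4],
  ![10,8,6],
  ![10,9,14],
  ![10,10,5],
  ![10,11,9],
  ![10,11,13],
  ![10,12,4],
  ![10,13,8],
  ![10,13,12],
  ![10,14,3],
  ![11,0,5],
  ![11,0,9],
  ![11,1,0],
  ![11,1,13],
  ![11,2,4],
  ![11,2,8],
  ![11,3,12],
  ![11,4,3],
  ![11,4,7],
  ![11,5,11],
  ![11,5,13],
  ![11,6,2],
  ![11,7,11],
  ![11,7,13],
  ![11,8,2],
  ![11,9,8],
  ![11,9,10],
  ![11,9,12],
  ![11,10,1],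
  ![11,10,3],
  ![11,11,7],
  ![11,11,11],
  ![11,12,0],
  ![11,12,2],
  ![11,13,6],
  ![11,13,10],
  ![11,14,1],
  ![11,14,14],
  ![12,0,3],
  ![12,0,7],
  ![12,1,11],
  ![12,2,2],
  ![12,2,6],
  ![12,3,10],
  ![12,4,1],
  ![12,4,5],
  ![12,5,9],
  ![12,6,0],
  ![12,7,6],
  ![12,7,9],
  ![12,8,0],
  ![12,8,4],
  ![12,9,6],
  ![12,10,14],
  ![12,11,5],
  ![12,11,9],
  ![12,12,13],
  ![12,13,4],
  ![12,13,8],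
  ![12,14,12],
  ![13,0,1],
  ![13,0,5],
  ![13,1,9],
  ![13,1,13],
  ![13,2,0],
  ![13,2,4],
  ![13,3,8],
  ![13,3,12],
  ![13,4,3],
  ![13,4,14],
  ![13,5,7],
  ![13,5,11],
  ![13,6,2],
  ![13,6,4],
  ![13,6,13],
  ![13,7,11],
  ![13,8,2],
  ![13,8,13],
  ![13,9,8],
  ![13,9,10],
  ![13,10,1],
  ![13,10,3],
  ![13,10,12],
  ![13,11,7],
  ![13,12,0],
  ![13,12,11],
  ![13,13,2],
  ![13,13,6],
  ![13,14,10],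
  ![13,14,14],
  ![14,0,3],
  ![14,1,7],
  ![14,1,11],
  ![14,2,2],
  ![14,3,6],
  ![14,3,10],
  ![14,4,1],
  ![14,5,9],
  ![14,6,0],
  ![14,7,6],
  ![14,7,9],
  ![14,8,0],
  ![14,9,6],
  ![14,10,14],
  ![14,11,5],
  ![14,12,9],
  ![14,12,13],
  ![14,13,4],
  ![14,14,8],
  ![14,14,12]]

set_option maxRecDepth 1000000 in
set_option maxHeartbeats 4000000 in
lemma indepList_pairwise : indepList.Pairwise (fun u v => goodB u v = true) := by decide

lemma indepList_pairwise' :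
    indepList.Pairwise (fun u v =>
      u ≠ v ∧ ¬ (strongPow (cycleGraphZMod 15) 3).Adj u v) :=
  indepList_pairwise.imp goodB_spec

lemma indepList_nodup : indepList.Nodup :=
  indepList_pairwise'.imp fun h => h.1

set_option maxRecDepth 1000000 in
lemma indepList_length : indepList.length = 382 := by decide

/-- The explicit independent set as a finset. -/
def indepFinset : Finset (Fin 3 → ZMod 15) :=
  ⟨(indepList : Multiset (Fin 3 → ZMod 15)), Multiset.coe_nodup.mpr indepList_nodup⟩

lemma indepFinset_isIndep : IsIndepFinset (strongPow (cycleGraphZMod 15) 3) indepFinset := by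
  intro u hu v hv hne
  have hu' : u ∈ indepList := by simpa [indepFinset] using hu
  have hv' : v ∈ indepList := by simpa [indepFinset] using hv
  have hsym : Symmetric (fun u v : Fin 3 → ZMod 15 =>
      u ≠ v ∧ ¬ (strongPow (cycleGraphZMod 15) 3).Adj u v) := by
    intro a b hab
    exact ⟨hab.1.symm, fun h => hab.2 h.symm⟩
  haveI : Std.Symm (fun u v : Fin 3 → ZMod 15 =>
      u ≠ v ∧ ¬ (strongPow (cycleGraphZMod 15) 3).Adj u v) := ⟨fun a b h => hsym h⟩
  exact (List.Pairwise.forall indepList_pairwise' hu' hv' hne).2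

lemma indepFinset_card : indepFinset.card = 382 := by
  simpa [indepFinset, Finset.card] using indepList_length

/-- The independence number of the third strong power of the 15-cycle
satisfies `α(C_15^{⊠3}) ≥ 382`. -/
theorem indepNum_cycle15_strongPow_three : 382 ≤ _root_.indepNum (strongPow (cycleGraphZMod 15) 3) := by
  have hmem : (382 : ℕ) ∈ {n : ℕ | ∃ s : Finset (Fin 3 → ZMod 15),
      IsIndepFinset (strongPow (cycleGraphZMod 15) 3) s ∧ s.card = n} :=
    ⟨indepFinset, indepFinset_isIndep, indepFinset_card⟩
  have hbdd : BddAbove {n : ℕ | ∃ s : Finset (Fin 3 → ZMod 15),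
      IsIndepFinset (strongPow (cycleGraphZMod 15) 3) s ∧ s.card = n} := by
    refine ⟨Fintype.card (Fin 3 → ZMod 15), ?_⟩
    rintro n ⟨s, -, rfl⟩
    exact Finset.card_le_univ s
  exact le_csSup hbdd hmem
end

section
/- In the strong product E_{2873/383} ⊠ E_{2873/382} ⊠ E_{2873/381} ⊠ E_{2873/381}, whose vertex set is (ZMod 2873)^4, the set S = {(t, 15·t, 1073·t, 1125·t) : t ∈ ZMod 2873} is an independent set (its elements are pairwise non-adjacent) of cardinality 2873. -/
open SimpleGraph

/-- The orbit set `{(t, 15t, 1073t, 1125t) : t ∈ ZMod 2873}`. -/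
def orbitSet2873 : Set (Fin 4 → ZMod 2873) :=
  {f | ∃ t : ZMod 2873, f = fun i => (![1, 15, 1073, 1125] : Fin 4 → ZMod 2873) i * t}


/-- Auxiliary: check that `q ≤ m % 2873` and `q ≤ 2873 - m % 2873`. -/
def good2873 (q m : ℕ) : Bool := decide (q ≤ m % 2873) && decide (q ≤ 2873 - m % 2873)

def ok2873 (d : ℕ) : Bool :=
  good2873 383 (1 * d) || good2873 382 (15 * d) || good2873 381 (1073 * d) || good2873 381 (1125 * d)

/-- checks `ok2873 d` for all `d ∈ [a, a+n)`, with fuel, by binary splitting -/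
def chk2873 : ℕ → ℕ → ℕ → Bool
  | 0, _, _ => false
  | fuel + 1, a, n =>
    if n = 0 then true
    else if n = 1 then ok2873 a
    else chk2873 fuel a (n / 2) && chk2873 fuel (a + n / 2) (n - n / 2)

lemma chk2873_spec : ∀ fuel a n, chk2873 fuel a n = true →
    ∀ d, a ≤ d → d < a + n → ok2873 d = true := by
  intro fuel
  induction fuel with
  | zero => intro a n h; simp [chk2873] at h
  | succ fuel ih =>
    intro a n h d hd1 hd2
    rw [chk2873] at h
    split_ifs at h with h0 h1
    · omega
    · have : d = a := by omega
      subst this; exact h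
    · rw [Bool.and_eq_true] at h
      rcases lt_or_ge d (a + n / 2) with hlt | hge
      · exact ih a (n / 2) h.1 d hd1 hlt
      · exact ih (a + n / 2) (n - n / 2) h.2 d hge (by omega)

lemma allok2873 : ∀ d, 0 < d → d < 2873 → ok2873 d = true := fun d h1 h2 =>
  chk2873_spec 13 1 2872 (by decide) d h1 (by omega)

lemma coord2873 (q cn : ℕ) (hq : 0 < q) (c t s : ZMod 2873) (hc : c.val = cn)
    (h1 : q ≤ cn * (t - s).val % 2873) (h2 : q ≤ 2873 - cn * (t - s).val % 2873) :
    ¬ (c * t = c * s ∨ (fractionGraph 2873 q).Adj (c * t) (c * s)) := by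
  set d := t - s with hd
  have hx : c * t - c * s = c * d := by rw [hd]; ring
  have hxval : (c * d).val = cn * d.val % 2873 := by
    rw [ZMod.val_mul, hc]
  have hxne : c * d ≠ 0 := by
    intro h
    rw [h, ZMod.val_zero] at hxval
    omega
  have hnegval : (-(c * d)).val = 2873 - (c * d).val := by
    rw [ZMod.neg_val, if_neg hxne]
  rintro (h | ⟨_, hadj⟩)
  · exact hxne (by rw [← hx, h, sub_self])
  · rw [hx] at hadj
    have : c * s - c * t = -(c * d) := by rw [hd]; ring
    rw [this] at hadj
    rcases hadj with h' | h' <;> omega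

set_option maxRecDepth 4000 in
/-- In `E_{2873/383} ⊠ E_{2873/382} ⊠ E_{2873/381} ⊠ E_{2873/381}`, the set
`S = {(t, 15t, 1073t, 1125t) : t ∈ ZMod 2873}` is an independent set of cardinality 2873. -/
theorem orbitSet2873_isIndep_card :
    (∀ u ∈ orbitSet2873, ∀ v ∈ orbitSet2873, u ≠ v →
      ¬ (strongProdFamily (fun i : Fin 4 =>
          fractionGraph 2873 (![383, 382, 381, 381] i))).Adj u v) ∧
    orbitSet2873.ncard = 2873 := by
  constructor
  · rintro u ⟨t, rfl⟩ v ⟨s, rfl⟩ hne hadj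
    obtain ⟨-, hall⟩ := hadj
    have hts : t ≠ s := fun h => hne (by rw [h])
    have hv1 : 0 < (t - s).val := ZMod.val_pos.mpr (sub_ne_zero.mpr hts)
    have hok := allok2873 (t - s).val hv1 (ZMod.val_lt _)
    simp only [ok2873, good2873, Bool.or_eq_true, Bool.and_eq_true, decide_eq_true_eq] at hok
    rcases hok with ((⟨h1, h2⟩ | ⟨h1, h2⟩) | ⟨h1, h2⟩) | ⟨h1, h2⟩
    · exact coord2873 383 1 (by norm_num) _ t s (by decide) h1 h2 (hall 0)
    · exact coord2873 382 15 (by norm_num) _ t s (by decide) h1 h2 (hall 1)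
    · exact coord2873 381 1073 (by norm_num) _ t s (by decide) h1 h2 (hall 2)
    · exact coord2873 381 1125 (by norm_num) _ t s (by decide) h1 h2 (hall 3)
  · have hrange : orbitSet2873 = Set.range
        (fun t : ZMod 2873 => fun i => (![1, 15, 1073, 1125] : Fin 4 → ZMod 2873) i * t) := by
      ext f
      exact ⟨fun ⟨t, h⟩ => ⟨t, h.symm⟩, fun ⟨t, h⟩ => ⟨t, h.symm⟩⟩
    have hinj : Function.Injective
        (fun t : ZMod 2873 => fun i => (![1, 15, 1073, 1125] : Fin 4 → ZMod 2873) i * t) := by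
      intro a b h
      have := congrFun h 0
      simpa using this
    rw [hrange, ← Set.image_univ, Set.ncard_image_of_injective _ hinj, Set.ncard_univ]
    rw [Nat.card_eq_fintype_card, ZMod.card]
end

section
/- Let r > 2 be a real number and let S be a finite subset of the circle C = ℝ/ℤ. Then there exist natural numbers a, b with b ≥ 1 and 2 ≤ a/b < r such that there is a cohomomorphism from the subgraph of the closed circle graph E_r^c induced on S to the open circle graph E^o_{a/b}. -/
open SimpleGraph

/-- Any finite induced subgraph of the closed circle graph `E_r^c` admits a cohomomorphism
to an open circle graph `E^o_{a/b}` with `2 ≤ a/b < r`. -/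
theorem finite_induced_closedCircleGraph_cohom_openCircleGraph (r : ℝ) (hr : 2 < r)
    (S : Set (AddCircle (1 : ℝ))) (hS : S.Finite) :
    ∃ a b : ℕ, 1 ≤ b ∧ 2 ≤ (a : ℝ) / (b : ℝ) ∧ (a : ℝ) / (b : ℝ) < r ∧
      ∃ f : S → AddCircle (1 : ℝ),
        IsCohom ((closedCircleGraph r).induce S) (openCircleGraph ((a : ℝ) / (b : ℝ))) f := by
  classical
  set F : Finset (AddCircle (1:ℝ) × AddCircle (1:ℝ)) :=
    (hS.toFinset ×ˢ hS.toFinset).filter (fun p => ¬ dist p.1 p.2 ≤ 1/r) with hFdef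
  have hr0 : (0:ℝ) < r := lt_trans two_pos hr
  set m : ℝ := if h : F.Nonempty then max 2 (1 / F.inf' h (fun p => dist p.1 p.2)) else 2
    with hm
  have hm2 : 2 ≤ m := by
    rw [hm]
    split
    · exact le_max_left _ _
    · exact le_refl 2
  have hdinf : ∀ h : F.Nonempty, 1/r < F.inf' h (fun p => dist p.1 p.2) := by
    intro h
    rw [Finset.lt_inf'_iff]
    intro p hp
    exact lt_of_not_ge (Finset.mem_filter.mp hp).2
  have hmr : m < r := by
    rw [hm]
    split
    case isTrue h =>
      apply max_lt hr
      have hd := hdinf h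
      calc 1 / F.inf' h (fun p => dist p.1 p.2) < 1 / (1/r) :=
            one_div_lt_one_div_of_lt (by positivity) hd
        _ = r := one_div_one_div r
    case isFalse h => exact hr
  obtain ⟨q, hq1, hq2⟩ := exists_rat_btwn hmr
  have hq2' : (2:ℝ) < (q:ℝ) := lt_of_le_of_lt hm2 hq1
  have hqpos : (0:ℚ) < q := by exact_mod_cast lt_trans two_pos hq2'
  have hnum : (0:ℤ) ≤ q.num := le_of_lt (Rat.num_pos.mpr hqpos)
  have hab : ((q.num.toNat : ℕ) : ℝ) / ((q.den : ℕ) : ℝ) = (q:ℝ) := by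
    rw [Rat.cast_def]
    congr 1
    rw [← Int.cast_natCast, Int.toNat_of_nonneg hnum]
  refine ⟨q.num.toNat, q.den, q.den_pos, ?_, ?_, fun x => (x : AddCircle (1:ℝ)), ?_⟩
  · rw [hab]; exact le_of_lt hq2'
  · rw [hab]; exact hq2
  · intro u v huv hadj
    have huv' : (u : AddCircle (1:ℝ)) ≠ (v : AddCircle (1:ℝ)) :=
      fun h => huv (Subtype.ext h)
    have hd : ¬ dist (u : AddCircle (1:ℝ)) (v : AddCircle (1:ℝ)) ≤ 1/r := by
      intro h
      exact hadj ⟨huv', h⟩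
    have hpF : ((u : AddCircle (1:ℝ)), (v : AddCircle (1:ℝ))) ∈ F := by
      rw [hFdef]
      refine Finset.mem_filter.mpr ⟨Finset.mem_product.mpr ⟨?_, ?_⟩, hd⟩
      · exact hS.mem_toFinset.mpr u.2
      · exact hS.mem_toFinset.mpr v.2
    have hne : F.Nonempty := ⟨_, hpF⟩
    have hmeq : m = max 2 (1 / F.inf' hne (fun p => dist p.1 p.2)) := by
      rw [hm, dif_pos hne]
    have hdlow : F.inf' hne (fun p => dist p.1 p.2) ≤
        dist (u : AddCircle (1:ℝ)) (v : AddCircle (1:ℝ)) :=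
      Finset.inf'_le _ hpF
    have hdpos : 0 < F.inf' hne (fun p => dist p.1 p.2) :=
      lt_trans (by positivity) (hdinf hne)
    have hqd : 1 / F.inf' hne (fun p => dist p.1 p.2) < (q:ℝ) :=
      lt_of_le_of_lt (hmeq ▸ le_max_right _ _) hq1
    have hfin : 1 / (q:ℝ) < dist (u : AddCircle (1:ℝ)) (v : AddCircle (1:ℝ)) := by
      calc 1 / (q:ℝ) < 1 / (1 / F.inf' hne (fun p => dist p.1 p.2)) :=
            one_div_lt_one_div_of_lt (by positivity) hqd
        _ = F.inf' hne (fun p => dist p.1 p.2) := one_div_one_div _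
        _ ≤ _ := hdlow
    refine ⟨huv', ?_⟩
    intro hAdj
    have := hAdj.2
    rw [hab] at this
    exact absurd this (not_lt_of_gt hfin)
end

section
/- Right-continuity on fraction graphs: let F be a real-valued, isomorphism-invariant function on all finite simple graphs such that F(G ⊔ H) = F(G) + F(H) for disjoint union, F(G ⊠ H) = F(G)·F(H) for the strong product, F of the edgeless graph on n vertices equals n for every natural number n, and F(G) ≤ F(H) whenever there exists a cohomomorphism from G to H. Then for every rational a/b ≥ 2 and every ε > 0 there exists δ > 0 such that for every rational p/q with a/b ≤ p/q < a/b + δ one has F(E_{p/q}) − F(E_{a/b}) < ε. -/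
open SimpleGraph

section RightCont


private def finSuccFunEquiv (α : Type*) (k : ℕ) : (Fin (k+1) → α) ≃ α × (Fin k → α) where
  toFun f := (f 0, fun i => f i.succ)
  invFun p := Fin.cons p.1 p.2
  left_inv f := by
    funext i
    refine Fin.cases rfl (fun j => ?_) i
    simp
  right_inv p := by
    ext <;> simp

private def powSuccIso {α : Type*} (G : SimpleGraph α) (k : ℕ) :
    strongPow G (k+1) ≃g strongProd G (strongPow G k) where
  toEquiv := finSuccFunEquiv α k
  map_rel_iff' := by
    intro u v
    show (strongProd G (strongPow G k)).Adj (u 0, fun i => u i.succ) (v 0, fun i => v i.succ)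
      ↔ (strongPow G (k+1)).Adj u v
    constructor
    · rintro ⟨hne, h0, ht⟩
      have hne' : u ≠ v := by
        rintro rfl
        exact hne rfl
      refine ⟨hne', fun i => ?_⟩
      refine Fin.cases ?_ (fun j => ?_) i
      · exact h0
      · rcases ht with h | h
        · exact Or.inl (congrFun h j)
        · exact h.2 j
    · rintro ⟨hne, h⟩
      refine ⟨fun hc => hne ((finSuccFunEquiv α k).injective hc), h 0, ?_⟩
      by_cases htl : (fun i : Fin k => u i.succ) = (fun i => v i.succ)
      · exact Or.inl htl
      · exact Or.inr ⟨htl, fun j => h j.succ⟩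

private def powZeroIso {α : Type*} (G : SimpleGraph α) :
    strongPow G 0 ≃g (⊥ : SimpleGraph (Fin 1)) where
  toEquiv := Equiv.ofUnique (Fin 0 → α) (Fin 1)
  map_rel_iff' := by
    intro u v
    constructor
    · intro h
      exact absurd h (by simp)
    · intro h
      exact absurd (Subsingleton.elim u v) h.1


private def botIso {V W : Type*} (e : V ≃ W) : (⊥ : SimpleGraph V) ≃g (⊥ : SimpleGraph W) :=
  ⟨e, by simp⟩

private theorem F_bot (F : ∀ (V : Type) [Fintype V], SimpleGraph V → ℝ)
    (hiso : ∀ (V W : Type) [Fintype V] [Fintype W]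
      (G : SimpleGraph V) (H : SimpleGraph W), Nonempty (G ≃g H) → F V G = F W H)
    (hnorm : ∀ n : ℕ, F (Fin n) ⊥ = n)
    (W : Type) [Fintype W] : F W ⊥ = Fintype.card W := by
  rw [hiso W (Fin (Fintype.card W)) ⊥ ⊥ ⟨botIso (Fintype.equivFin W)⟩, hnorm]

private theorem F_pow (F : ∀ (V : Type) [Fintype V], SimpleGraph V → ℝ)
    (hiso : ∀ (V W : Type) [Fintype V] [Fintype W]
      (G : SimpleGraph V) (H : SimpleGraph W), Nonempty (G ≃g H) → F V G = F W H)
    (hmul : ∀ (V W : Type) [Fintype V] [Fintype W]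
      (G : SimpleGraph V) (H : SimpleGraph W),
      F (V × W) (strongProd G H) = F V G * F W H)
    (hnorm : ∀ n : ℕ, F (Fin n) ⊥ = n)
    (α : Type) [Fintype α] (G : SimpleGraph α) :
    ∀ k : ℕ, F (Fin k → α) (strongPow G k) = (F α G) ^ k := by
  intro k
  induction k with
  | zero =>
      rw [hiso _ (Fin 1) _ ⊥ ⟨powZeroIso G⟩, hnorm]
      norm_num
  | succ n ih =>
      rw [hiso _ (α × (Fin n → α)) _ (strongProd G (strongPow G n)) ⟨powSuccIso G n⟩,
        hmul, ih, pow_succ]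
      ring

private theorem F_ge_one (F : ∀ (V : Type) [Fintype V], SimpleGraph V → ℝ)
    (hnorm : ∀ n : ℕ, F (Fin n) ⊥ = n)
    (hmono : ∀ (V W : Type) [Fintype V] [Fintype W]
      (G : SimpleGraph V) (H : SimpleGraph W),
      (∃ f : V → W, IsCohom G H f) → F V G ≤ F W H)
    (V : Type) [Fintype V] (hV : Nonempty V) (G : SimpleGraph V) : 1 ≤ F V G := by
  have h := hmono (Fin 1) V ⊥ G ⟨fun _ => Classical.arbitrary V, ?_⟩
  · have h1 := hnorm 1
    rw [h1] at h
    exact_mod_cast h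
  · intro u v hne _
    exact absurd (Subsingleton.elim u v) hne

private theorem F_le_card (F : ∀ (V : Type) [Fintype V], SimpleGraph V → ℝ)
    (hnorm : ∀ n : ℕ, F (Fin n) ⊥ = n)
    (hmono : ∀ (V W : Type) [Fintype V] [Fintype W]
      (G : SimpleGraph V) (H : SimpleGraph W),
      (∃ f : V → W, IsCohom G H f) → F V G ≤ F W H)
    (V : Type) [Fintype V] (G : SimpleGraph V) : F V G ≤ Fintype.card V := by
  have h := hmono V (Fin (Fintype.card V)) G ⊥ ⟨Fintype.equivFin V, ?_⟩
  · rw [hnorm] at h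
    exact h
  · intro u v hne _
    refine ⟨fun hc => hne ((Fintype.equivFin V).injective hc), ?_⟩
    simp

private theorem far_of_not_adj {p q : ℕ} [NeZero p] {u v : ZMod p}
    (hne : u ≠ v) (h : ¬ (fractionGraph p q).Adj u v) :
    q ≤ (u - v).val ∧ (u - v).val + q ≤ p := by
  have h2 : ¬ ((u - v).val < q ∨ (v - u).val < q) := fun hc => h ⟨hne, hc⟩
  push_neg at h2
  have hsub : u - v ≠ 0 := sub_ne_zero.mpr hne
  have hneg : (v - u).val = p - (u - v).val := by
    have hvu : v - u = -(u - v) := by ring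
    rw [hvu, ZMod.neg_val, if_neg hsub]
  have hvlt : (u - v).val < p := ZMod.val_lt _
  omega

private theorem not_adj_of_far {p q : ℕ} [NeZero p] {u v : ZMod p}
    (h1 : q ≤ (u - v).val) (h2 : q ≤ (v - u).val) : ¬ (fractionGraph p q).Adj u v :=
  fun hc => by rcases hc.2 with h | h <;> omega

private theorem mon_core {p q P Q : ℕ} (hp : 0 < p) (hq : 1 ≤ q) (hQ : 1 ≤ Q)
    (hfrac : p * Q ≤ q * P) {X Y d : ℕ} (hXY : X = Y + d) (hd1 : q ≤ d) (hd2 : d + q ≤ p) :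
    Y * P / p + Q ≤ X * P / p ∧ X * P / p + Q ≤ P + Y * P / p := by
  have hqp : q ≤ p := by omega
  set gx := X * P / p with hgx
  set gy := Y * P / p with hgy
  have hx : p * gx + X * P % p = X * P := Nat.div_add_mod (X*P) p
  have hy : p * gy + Y * P % p = Y * P := Nat.div_add_mod (Y*P) p
  set r := X * P % p with hr
  set s := Y * P % p with hs
  have hrp : r < p := Nat.mod_lt _ hp
  have hsp : s < p := Nat.mod_lt _ hp
  have hkey : p * gx + r = p * gy + s + d * P := by
    have hXP : X * P = Y * P + d * P := by rw [hXY]; ring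
    omega
  have hge : gy ≤ gx := Nat.div_le_div_right (Nat.mul_le_mul_right _ (by omega))
  constructor
  · by_contra hc
    push_neg at hc
    have h1 : p * (gx + 1) ≤ p * (gy + Q) := Nat.mul_le_mul_left p (by omega)
    have e1 : p * (gx + 1) = p * gx + p := by ring
    have e2 : p * (gy + Q) = p * gy + p * Q := by ring
    have h2 : q * P ≤ d * P := Nat.mul_le_mul_right _ hd1
    omega
  · by_contra hc
    push_neg at hc
    have h1 : p * (P + gy + 1) ≤ p * (gx + Q) := Nat.mul_le_mul_left p hc
    have h2 : d * P ≤ (p - q) * P := Nat.mul_le_mul_right _ (by omega)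
    have h3 : (p - q) * P + q * P = p * P := by
      rw [← Nat.add_mul]
      congr 1
      omega
    have h4 : p * (P + gy + 1) = p * P + p * gy + p := by ring
    have h5 : p * (gx + Q) = p * gx + p * Q := by ring
    omega

private theorem image_far {P Q : ℕ} [NeZero P] (hQ : 1 ≤ Q) (gu gv e : ℕ)
    (he : gu = gv + e) (h1 : Q ≤ e) (h2 : e + Q ≤ P) :
    ((gu : ZMod P) ≠ (gv : ZMod P)) ∧ Q ≤ ((gu : ZMod P) - gv).val
      ∧ Q ≤ ((gv : ZMod P) - gu).val := by
  have heP : e < P := by omega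
  have hdiff : (gu : ZMod P) - gv = (e : ZMod P) := by
    rw [he]
    push_cast
    ring
  have hval : ((gu : ZMod P) - gv).val = e := by
    rw [hdiff, ZMod.val_cast_of_lt heP]
  have hne0 : (gu : ZMod P) - gv ≠ 0 := by
    intro hc
    rw [hc, ZMod.val_zero] at hval
    omega
  have hneg : ((gv : ZMod P) - gu) = -((gu : ZMod P) - gv) := by ring
  have hval2 : ((gv : ZMod P) - gu).val = P - e := by
    rw [hneg, ZMod.neg_val, if_neg hne0, hval]
  refine ⟨fun hc => hne0 (by rw [hc]; ring), by omega, by omega⟩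

private theorem mon_cohom {p q P Q : ℕ} [NeZero p] [NeZero P]
    (hq : 1 ≤ q) (hQ : 1 ≤ Q) (hfrac : p * Q ≤ q * P) :
    IsCohom (fractionGraph p q) (fractionGraph P Q)
      (fun i : ZMod p => ((i.val * P / p : ℕ) : ZMod P)) := by
  intro u v hne hnadj
  obtain ⟨hd1, hd2⟩ := far_of_not_adj hne hnadj
  set d := (u - v).val with hdd
  have hp : 0 < p := Nat.pos_of_ne_zero (NeZero.ne p)
  have huv : u.val = (v.val + d) % p := by
    conv_lhs => rw [show u = v + (u - v) by ring]
    rw [ZMod.val_add]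
  have hvp : v.val < p := ZMod.val_lt v
  by_cases hcase : v.val + d < p
  · have hX : u.val = v.val + d := by rw [huv, Nat.mod_eq_of_lt hcase]
    obtain ⟨hm1, hm2⟩ := mon_core hp hq hQ hfrac hX hd1 hd2
    set gu := u.val * P / p
    set gv := v.val * P / p
    obtain ⟨hne', hf1, hf2⟩ := image_far (P := P) hQ gu gv (gu - gv) (by omega) (by omega) (by omega)
    exact ⟨hne', not_adj_of_far hf1 hf2⟩
  · have hX : v.val = u.val + (p - d) := by
      have h2p : v.val + d < 2 * p := by omega
      have : u.val = v.val + d - p := by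
        rw [huv, Nat.mod_eq_sub_mod (by omega), Nat.mod_eq_of_lt (by omega)]
      omega
    obtain ⟨hm1, hm2⟩ := mon_core hp hq hQ hfrac hX (by omega) (by omega)
    set gu := u.val * P / p
    set gv := v.val * P / p
    obtain ⟨hne', hf1, hf2⟩ := image_far (P := P) hQ gv gu (gv - gu) (by omega) (by omega) (by omega)
    exact ⟨hne'.symm, not_adj_of_far hf2 hf1⟩

private theorem coreA {a b M : ℕ} (hb : 1 ≤ b) (hab : 2*b ≤ a) (hM : 2 ≤ M)
    {w d : ℕ} (hd1 : b*M ≤ d) (hd2 : d ≤ (a-b)*M + 1) (hw : w % M ≠ M - 1) :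
    w / M + b ≤ (w + d) / M ∧ (w + d) / M ≤ w / M + (a - b) := by
  have hM0 : 0 < M := by omega
  have hsM : w % M < M := Nat.mod_lt _ hM0
  have hrM : d % M < M := Nat.mod_lt _ hM0
  have hsum : (w + d) / M = w / M + d / M + (w % M + d % M) / M := by
    conv_lhs => rw [show w + d = M * (w / M + d / M) + (w % M + d % M) by
      have h1 := Nat.div_add_mod w M
      have h2 := Nat.div_add_mod d M
      ring_nf
      omega]
    rw [Nat.mul_add_div hM0]
  set t := d / M with hts
  clear_value t
  set c := (w % M + d % M) / M with hcs
  clear_value c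
  have hc1 : c ≤ 1 := by
    have h2 : (w % M + d % M) / M < 2 := (Nat.div_lt_iff_lt_mul hM0).mpr (by omega)
    omega
  have ht1 : b ≤ t := by
    rw [hts]
    exact (Nat.le_div_iff_mul_le hM0).mpr hd1
  have ht2 : t ≤ a - b := by
    rw [hts]
    have h : d / M ≤ ((a-b)*M+1) / M := Nat.div_le_div_right hd2
    have h1M : (1:ℕ) / M = 0 := Nat.div_eq_of_lt (by omega)
    rw [mul_comm, Nat.mul_add_div hM0, h1M] at h
    omega
  by_cases hta : t = a - b
  · have hdm : M * (a - b) + d % M = d := by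
      have h0 : M * (d / M) + d % M = d := Nat.div_add_mod d M
      rw [← hts, hta] at h0
      exact h0
    have hMt : M * (a - b) = (a - b) * M := mul_comm _ _
    have hr0 : d % M ≤ 1 := by omega
    have hcz : c = 0 := by
      rcases Nat.eq_zero_or_pos c with h | h
      · exact h
      · exfalso
        have hge : 1 * M ≤ w % M + d % M := (Nat.le_div_iff_mul_le hM0).mp (by rw [← hcs]; omega)
        omega
    omega
  · omega

private theorem core {a b M : ℕ} (hb : 1 ≤ b) (hab : 2*b ≤ a) (hM : 2 ≤ M)
    [NeZero (a*M+1)] [NeZero a]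
    {u w : ZMod (a*M+1)}
    (hfar1 : b*M ≤ (u - w).val) (hfar2 : (u - w).val + b*M ≤ a*M+1)
    (hu : u.val % M ≠ M - 1) (hw : w.val % M ≠ M - 1) :
    ((u.val / M : ℕ) : ZMod a) ≠ ((w.val / M : ℕ) : ZMod a)
    ∧ b ≤ (((u.val / M : ℕ) : ZMod a) - ((w.val / M : ℕ) : ZMod a)).val
    ∧ b ≤ (((w.val / M : ℕ) : ZMod a) - ((u.val / M : ℕ) : ZMod a)).val := by
  set d := (u - w).val with hd
  have hdP : d < a*M+1 := ZMod.val_lt _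
  have h3 : (a-b)*M + b*M = a*M := by
    rw [← Nat.add_mul]
    congr 1
    omega
  have hdub : d ≤ (a-b)*M + 1 := by omega
  have huw : u.val = (w.val + d) % (a*M+1) := by
    conv_lhs => rw [show u = w + (u - w) by ring]
    rw [ZMod.val_add]
  have hwP : w.val < a*M+1 := ZMod.val_lt _
  by_cases hcase : w.val + d < a*M+1
  · have hX : u.val = w.val + d := by rw [huw, Nat.mod_eq_of_lt hcase]
    obtain ⟨h1, h2⟩ := coreA hb hab hM hfar1 hdub hw
    rw [← hX] at h1 h2
    obtain ⟨hne, hv1, hv2⟩ := image_far (P := a) (Q := b) hb (u.val / M) (w.val / M)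
      (u.val/M - w.val/M) (by omega) (by omega) (by omega)
    exact ⟨hne, hv1, hv2⟩
  · have hX : w.val = u.val + ((a*M+1) - d) := by
      have hsub : u.val = w.val + d - (a*M+1) := by
        rw [huw, Nat.mod_eq_sub_mod (by omega), Nat.mod_eq_of_lt (by omega)]
      omega
    obtain ⟨h1, h2⟩ := coreA hb hab hM (w := u.val) (d := (a*M+1) - d)
      (by omega) (by omega) hu
    rw [← hX] at h1 h2
    obtain ⟨hne, hv1, hv2⟩ := image_far (P := a) (Q := b) hb (w.val / M) (u.val / M)
      (w.val/M - u.val/M) (by omega) (by omega) (by omega)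
    exact ⟨hne.symm, hv2, hv1⟩

private theorem zone_shift2 {a M : ℕ} [NeZero (a*M+1)] (ha : 1 ≤ a) (hM : 3 ≤ M)
    (v : ZMod (a*M+1)) (h : v.val % M = M - 1) : (v + 2).val % M ≠ M - 1 := by
  have hvP : v.val < a*M+1 := ZMod.val_lt _
  have h2v : ((2:ℕ) : ZMod (a*M+1)).val = 2 := ZMod.val_cast_of_lt (by
    have hMa : M ≤ a*M := Nat.le_mul_of_pos_left M ha
    omega)
  have hval : (v + 2).val = (v.val + 2) % (a*M+1) := by
    rw [show (2 : ZMod (a*M+1)) = ((2:ℕ) : ZMod (a*M+1)) by push_cast; ring, ZMod.val_add, h2v]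
  have hMa : M ≤ a*M := Nat.le_mul_of_pos_left M ha
  by_cases hc : v.val + 2 < a*M+1
  · rw [hval, Nat.mod_eq_of_lt hc]
    have : (v.val + 2) % M = ((v.val % M) + 2) % M := by
      conv_lhs => rw [← Nat.div_add_mod v.val M]
      rw [Nat.add_assoc, Nat.mul_add_mod]
    rw [this, h]
    have hM1 : M - 1 + 2 = M + 1 := by omega
    rw [hM1, Nat.add_mod_left]
    have : 1 % M = 1 := Nat.mod_eq_of_lt (by omega)
    omega
  · -- v.val ∈ {a*M-1, a*M}
    have hvv : v.val = a*M-1 ∨ v.val = a*M := by omega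
    rcases hvv with hv | hv
    · rw [hval, hv, show a*M - 1 + 2 = a*M+1 by omega, Nat.mod_self, Nat.zero_mod]
      omega
    · exfalso
      rw [hv, Nat.mul_mod_left] at h
      omega

private theorem count_zone {a M : ℕ} [NeZero (a*M+1)] (hM : 2 ≤ M) (ha : 1 ≤ a)
    (v : ZMod (a*M+1)) :
    ((Finset.range (a*M+1)).filter
      (fun σ : ℕ => ((v + (σ : ZMod (a*M+1))).val % M = M - 1))).card ≤ a := by
  have hstep1 : ((Finset.range (a*M+1)).filter
      (fun σ : ℕ => ((v + (σ : ZMod (a*M+1))).val % M = M - 1))).card ≤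
      ((Finset.range (a*M+1)).filter (fun x => x % M = M - 1)).card := by
    refine Finset.card_le_card_of_injOn (fun σ : ℕ => (v + (σ : ZMod (a*M+1))).val) ?_ ?_
    · intro σ hσ
      rw [Finset.mem_coe, Finset.mem_filter] at hσ ⊢
      exact ⟨Finset.mem_range.mpr (ZMod.val_lt _), hσ.2⟩
    · intro σ1 h1 σ2 h2 heq
      rw [Finset.coe_filter, Set.mem_setOf_eq] at h1 h2
      have h1r := Finset.mem_range.mp h1.1
      have h2r := Finset.mem_range.mp h2.1
      have : v + (σ1 : ZMod (a*M+1)) = v + (σ2 : ZMod (a*M+1)) := ZMod.val_injective _ heq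
      have hc : (σ1 : ZMod (a*M+1)) = (σ2 : ZMod (a*M+1)) := by
        exact add_left_cancel this
      calc σ1 = (σ1 : ZMod (a*M+1)).val := (ZMod.val_cast_of_lt h1r).symm
      _ = (σ2 : ZMod (a*M+1)).val := by rw [hc]
      _ = σ2 := ZMod.val_cast_of_lt h2r
  have hstep2 : ((Finset.range (a*M+1)).filter (fun x => x % M = M - 1)).card ≤
      (Finset.range a).card := by
    refine Finset.card_le_card_of_injOn (fun x => x / M) ?_ ?_
    · intro x hx
      rw [Finset.mem_coe, Finset.mem_filter, Finset.mem_range] at hx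
      rw [Finset.mem_coe, Finset.mem_range]
      have hdm : M * (x / M) + x % M = x := Nat.div_add_mod x M
      have hcomm : M * a = a * M := mul_comm M a
      have hlt : M * (x / M) < M * a := by omega
      exact Nat.lt_of_mul_lt_mul_left hlt
    · intro x1 h1 x2 h2 heq
      rw [Finset.coe_filter, Set.mem_setOf_eq] at h1 h2
      have hd1 : M * (x1 / M) + x1 % M = x1 := Nat.div_add_mod x1 M
      have hd2 : M * (x2 / M) + x2 % M = x2 := Nat.div_add_mod x2 M
      change x1 / M = x2 / M at heq
      rw [heq] at hd1
      omega
  rw [Finset.card_range] at hstep2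
  omega

private theorem exists_good_shift {a M : ℕ} [NeZero (a*M+1)] (hM : 2 ≤ M) (ha : 1 ≤ a)
    (x : Fin (a*M+1) → ZMod (a*M+1)) :
    ∃ σ : ℕ, σ < a*M+1 ∧
      (Finset.univ.filter (fun i : Fin (a*M+1) =>
        ((x i + (σ : ZMod (a*M+1))).val % M = M - 1))).card ≤ a := by
  by_contra hcon
  push_neg at hcon
  have hsum1 : (a*M+1) * (a+1) ≤
      ∑ σ ∈ Finset.range (a*M+1), (Finset.univ.filter (fun i : Fin (a*M+1) =>
        ((x i + (σ : ZMod (a*M+1))).val % M = M - 1))).card := by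
    calc (a*M+1) * (a+1) = ∑ _σ ∈ Finset.range (a*M+1), (a+1) := by
          rw [Finset.sum_const, Finset.card_range, smul_eq_mul]
    _ ≤ _ := Finset.sum_le_sum (fun σ hσ => hcon σ (Finset.mem_range.mp hσ))
  have hsum2 : ∑ σ ∈ Finset.range (a*M+1), (Finset.univ.filter (fun i : Fin (a*M+1) =>
        ((x i + (σ : ZMod (a*M+1))).val % M = M - 1))).card ≤ (a*M+1) * a := by
    have hswap : ∑ σ ∈ Finset.range (a*M+1), (Finset.univ.filter (fun i : Fin (a*M+1) =>
        ((x i + (σ : ZMod (a*M+1))).val % M = M - 1))).card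
        = ∑ i : Fin (a*M+1), ((Finset.range (a*M+1)).filter
          (fun σ : ℕ => ((x i + (σ : ZMod (a*M+1))).val % M = M - 1))).card := by
      simp_rw [Finset.card_filter]
      exact Finset.sum_comm
    rw [hswap]
    calc ∑ i : Fin (a*M+1), ((Finset.range (a*M+1)).filter
          (fun σ : ℕ => ((x i + (σ : ZMod (a*M+1))).val % M = M - 1))).card
        ≤ ∑ _i : Fin (a*M+1), a := Finset.sum_le_sum (fun i _ => count_zone hM ha (x i))
    _ = (a*M+1) * a := by
        rw [Finset.sum_const, smul_eq_mul, Finset.card_univ, Fintype.card_fin]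
  have hlt : (a*M+1) * a < (a*M+1) * (a+1) := by
    have h0 : 0 < a*M+1 := by omega
    exact (Nat.mul_lt_mul_left h0).mpr (by omega)
  omega

private theorem card_small_subsets (k a : ℕ) :
    Fintype.card {s : Finset (Fin k) // s.card ≤ a} ≤ (a+1) * (k+1)^a := by
  classical
  rw [Fintype.card_subtype]
  have hsub : (Finset.univ.filter (fun s : Finset (Fin k) => s.card ≤ a)) ⊆
      (Finset.range (a+1)).biUnion (fun j => Finset.powersetCard j Finset.univ) := by
    intro s hs
    rw [Finset.mem_filter] at hs
    rw [Finset.mem_biUnion]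
    exact ⟨s.card, Finset.mem_range.mpr (by omega),
      Finset.mem_powersetCard_univ.mpr rfl⟩
  calc (Finset.univ.filter (fun s : Finset (Fin k) => s.card ≤ a)).card
      ≤ ((Finset.range (a+1)).biUnion (fun j => Finset.powersetCard j Finset.univ)).card :=
        Finset.card_le_card hsub
  _ ≤ ∑ j ∈ Finset.range (a+1), (Finset.powersetCard j (Finset.univ : Finset (Fin k))).card :=
        Finset.card_biUnion_le
  _ ≤ ∑ _j ∈ Finset.range (a+1), (k+1)^a := by
        apply Finset.sum_le_sum
        intro j hj
        rw [Finset.card_powersetCard, Finset.card_univ, Fintype.card_fin]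
        calc k.choose j ≤ k ^ j := Nat.choose_le_pow k j
        _ ≤ (k+1) ^ j := Nat.pow_le_pow_left (by omega) j
        _ ≤ (k+1) ^ a := Nat.pow_le_pow_right (by omega) (Finset.mem_range.mp hj |> Nat.lt_succ_iff.mp)
  _ = (a+1) * (k+1)^a := by
        rw [Finset.sum_const, Finset.card_range, smul_eq_mul]

private theorem big_cohom (a b M : ℕ) (hb : 1 ≤ b) (hab : 2*b ≤ a) (hM : 3 ≤ M) :
    ∃ f : (Fin (a*M+1) → ZMod (a*M+1)) →
        ((Fin (a*M+1) → ZMod a) × (Fin (a*M+1) × {s : Finset (Fin (a*M+1)) // s.card ≤ a})),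
      IsCohom (strongPow (fractionGraph (a*M+1) (b*M)) (a*M+1))
        (strongProd (strongPow (fractionGraph a b) (a*M+1))
          (⊥ : SimpleGraph (Fin (a*M+1) × {s : Finset (Fin (a*M+1)) // s.card ≤ a}))) f := by
  haveI : NeZero (a*M+1) := ⟨by omega⟩
  haveI : NeZero a := ⟨by omega⟩
  have ha : 1 ≤ a := by omega
  have hM2 : 2 ≤ M := by omega
  classical
  have hgs : ∀ x : Fin (a*M+1) → ZMod (a*M+1), ∃ σ : ℕ, σ < a*M+1 ∧
      (Finset.univ.filter (fun i : Fin (a*M+1) =>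
        ((x i + (σ : ZMod (a*M+1))).val % M = M - 1))).card ≤ a :=
    fun x => exists_good_shift hM2 ha x
  choose σf hσlt hσcard using hgs
  set Sf : (Fin (a*M+1) → ZMod (a*M+1)) → Finset (Fin (a*M+1)) := fun x =>
    Finset.univ.filter (fun i : Fin (a*M+1) =>
      ((x i + ((σf x : ℕ) : ZMod (a*M+1))).val % M = M - 1)) with hSf
  refine ⟨fun x =>
    (fun i => (((x i + (((σf x : ℕ) : ZMod (a*M+1)) +
        (if i ∈ Sf x then 2 else 0))).val / M : ℕ) : ZMod a),
     (⟨σf x, hσlt x⟩, ⟨Sf x, hσcard x⟩)), ?_⟩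
  intro X Y hne hnadj
  have hex : ∃ i₀, X i₀ ≠ Y i₀ ∧ ¬ (fractionGraph (a*M+1) (b*M)).Adj (X i₀) (Y i₀) := by
    by_contra hc
    push_neg at hc
    refine hnadj ⟨hne, fun i => ?_⟩
    by_cases h : X i = Y i
    · exact Or.inl h
    · exact Or.inr (hc i h)
  obtain ⟨i₀, hne0, hnadj0⟩ := hex
  obtain ⟨hfar1, hfar2⟩ := far_of_not_adj hne0 hnadj0
  by_cases hcol : σf X = σf Y ∧ Sf X = Sf Y
  · obtain ⟨hσ, hS⟩ := hcol
    set c : ZMod (a*M+1) := ((σf X : ℕ) : ZMod (a*M+1)) +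
      (if i₀ ∈ Sf X then 2 else 0) with hcdef
    have hmemX : i₀ ∈ Sf X ↔ ((X i₀ + ((σf X : ℕ) : ZMod (a*M+1))).val % M = M - 1) := by
      rw [hSf]
      simp
    have hmemY : i₀ ∈ Sf X ↔ ((Y i₀ + ((σf X : ℕ) : ZMod (a*M+1))).val % M = M - 1) := by
      rw [hS]
      have hy : i₀ ∈ Sf Y ↔ ((Y i₀ + ((σf Y : ℕ) : ZMod (a*M+1))).val % M = M - 1) := by
        rw [hSf]
        simp
      rw [hy, ← hσ]
    have hzu : (X i₀ + c).val % M ≠ M - 1 := by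
      by_cases hmem : i₀ ∈ Sf X
      · have hz := hmemX.mp hmem
        have h2 := zone_shift2 ha hM _ hz
        rw [hcdef, if_pos hmem, ← add_assoc]
        exact h2
      · rw [hcdef, if_neg hmem, add_zero]
        exact fun hcontra => hmem (hmemX.mpr hcontra)
    have hzw : (Y i₀ + c).val % M ≠ M - 1 := by
      by_cases hmem : i₀ ∈ Sf X
      · have hz := hmemY.mp hmem
        have h2 := zone_shift2 ha hM _ hz
        rw [hcdef, if_pos hmem, ← add_assoc]
        exact h2
      · rw [hcdef, if_neg hmem, add_zero]
        exact fun hcontra => hmem (hmemY.mpr hcontra)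
    have hsub : (X i₀ + c) - (Y i₀ + c) = X i₀ - Y i₀ := by ring
    obtain ⟨hgne, hgv1, hgv2⟩ := core hb hab hM2 (u := X i₀ + c) (w := Y i₀ + c)
      (by rw [hsub]; exact hfar1) (by rw [hsub]; exact hfar2) hzu hzw
    -- identify image coordinates
    have hfX : ((((X i₀ + c).val / M : ℕ) : ZMod a)) =
        (((X i₀ + (((σf X : ℕ) : ZMod (a*M+1)) + (if i₀ ∈ Sf X then 2 else 0))).val / M : ℕ) : ZMod a) := by
      rw [hcdef]
    have hfY : ((((Y i₀ + c).val / M : ℕ) : ZMod a)) =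
        (((Y i₀ + (((σf Y : ℕ) : ZMod (a*M+1)) + (if i₀ ∈ Sf Y then 2 else 0))).val / M : ℕ) : ZMod a) := by
      rw [hcdef, ← hσ, ← hS]
    constructor
    · intro h
      have h1 := congrFun (congrArg Prod.fst h) i₀
      simp only [] at h1
      rw [← hfX, ← hfY] at h1
      exact hgne h1
    · intro hadj
      obtain ⟨hane, h1, h2⟩ := hadj
      rcases h1 with h1 | h1
      · have h4 := congrFun h1 i₀
        simp only [] at h4
        rw [← hfX, ← hfY] at h4
        exact hgne h4
      · obtain ⟨hpne, hall⟩ := h1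
        rcases hall i₀ with h3 | h3
        · simp only [] at h3
          rw [← hfX, ← hfY] at h3
          exact hgne h3
        · simp only [] at h3
          rw [← hfX, ← hfY] at h3
          exact not_adj_of_far hgv1 hgv2 h3
  · have hsnd : (⟨σf X, hσlt X⟩ : Fin (a*M+1)) ≠ ⟨σf Y, hσlt Y⟩ ∨
        (⟨Sf X, hσcard X⟩ : {s : Finset (Fin (a*M+1)) // s.card ≤ a}) ≠ ⟨Sf Y, hσcard Y⟩ := by
      by_contra hcc
      push_neg at hcc
      refine hcol ⟨?_, ?_⟩
      · have := congrArg Fin.val hcc.1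
        exact this
      · have := congrArg Subtype.val hcc.2
        exact this
    have hsndne : ((⟨σf X, hσlt X⟩, ⟨Sf X, hσcard X⟩) :
        Fin (a*M+1) × {s : Finset (Fin (a*M+1)) // s.card ≤ a}) ≠
        (⟨σf Y, hσlt Y⟩, ⟨Sf Y, hσcard Y⟩) := by
      intro h
      rcases hsnd with h' | h'
      · exact h' (congrArg Prod.fst h)
      · exact h' (congrArg Prod.snd h)
    constructor
    · intro h
      exact hsndne (congrArg Prod.snd h)
    · intro hadj
      obtain ⟨hane, h1, h2⟩ := hadj
      rcases h2 with h2 | h2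
      · exact hsndne h2
      · simp at h2

theorem rightContinuous_on_fractionGraphs'
    (F : ∀ (V : Type) [Fintype V], SimpleGraph V → ℝ)
    (hiso : ∀ (V W : Type) [Fintype V] [Fintype W]
      (G : SimpleGraph V) (H : SimpleGraph W), Nonempty (G ≃g H) → F V G = F W H)
    (hmul : ∀ (V W : Type) [Fintype V] [Fintype W]
      (G : SimpleGraph V) (H : SimpleGraph W),
      F (V × W) (strongProd G H) = F V G * F W H)
    (hnorm : ∀ n : ℕ, F (Fin n) ⊥ = n)
    (hmono : ∀ (V W : Type) [Fintype V] [Fintype W]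
      (G : SimpleGraph V) (H : SimpleGraph W),
      (∃ f : V → W, IsCohom G H f) → F V G ≤ F W H)
    (a b : ℕ) (hb : 1 ≤ b) (hab : 2 * b ≤ a) (ε : ℝ) (hε : 0 < ε) :
    ∃ δ : ℝ, 0 < δ ∧ ∀ p q : ℕ, 1 ≤ q → 2 * q ≤ p →
      (a : ℝ) / (b : ℝ) ≤ (p : ℝ) / (q : ℝ) → (p : ℝ) / (q : ℝ) < (a : ℝ) / (b : ℝ) + δ →
      ∀ (I1 : Fintype (ZMod p)) (I2 : Fintype (ZMod a)),
      @F (ZMod p) I1 (fractionGraph p q) - @F (ZMod a) I2 (fractionGraph a b) < ε := by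
  have ha2 : 2 ≤ a := by omega
  haveI : NeZero a := ⟨by omega⟩
  set ε' : ℝ := ε / (2 * a) with hε'def
  have hε'pos : 0 < ε' := by
    apply div_pos hε
    positivity
  have h1ε : (1:ℝ) < 1 + ε' := by linarith
  -- growth: find M
  have ht := tendsto_pow_const_div_const_pow_of_one_lt (a+2) h1ε
  have hev : ∀ᶠ n : ℕ in Filter.atTop, (n:ℝ)^(a+2)/(1+ε')^n < 1/(1+ε') :=
    ht.eventually_lt_const (by positivity)
  obtain ⟨N, hN⟩ := Filter.eventually_atTop.mp hev
  set M := max 3 N with hMdef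
  have hM3 : 3 ≤ M := le_max_left _ _
  have hMa : M ≤ a*M := Nat.le_mul_of_pos_left M (by omega)
  have hNM : N ≤ a*M+2 := by
    have := le_max_right 3 N
    omega
  have hgrow : (((a*M+1 : ℕ):ℝ)+1)^(a+2) ≤ (1+ε')^(a*M+1) := by
    have h2 := hN (a*M+2) hNM
    have hc : ((a*M+2 : ℕ):ℝ) = ((a*M+1 : ℕ):ℝ)+1 := by push_cast; ring
    have hpow : (1/(1+ε')) * (1+ε')^(a*M+2) = (1+ε')^(a*M+1) := by
      rw [show a*M+2 = (a*M+1)+1 by ring, pow_succ]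
      field_simp
    rw [div_lt_iff₀ (by positivity), hc, hpow] at h2
    exact le_of_lt h2
  haveI : NeZero (a*M+1) := ⟨by omega⟩
  refine ⟨1 / ((b:ℝ) * M), by positivity, ?_⟩
  intro p q hq hpq hle hlt I1 I2
  haveI : NeZero p := ⟨by omega⟩
  rw [Subsingleton.elim I1 (ZMod.fintype p), Subsingleton.elim I2 (ZMod.fintype a)]
  clear I1 I2
  -- the fraction inequality
  have hfrac : p * (b*M) ≤ q * (a*M+1) := by
    have hq0 : (0:ℝ) < q := by exact_mod_cast hq
    have hb0 : (0:ℝ) < b := by exact_mod_cast hb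
    have hM0 : (0:ℝ) < M := by
      have : (3:ℝ) ≤ M := by exact_mod_cast hM3
      linarith
    have h3 : (p:ℝ)/q * (q*(b*M)) < ((a:ℝ)/b + 1/((b:ℝ)*M)) * (q*(b*M)) :=
      mul_lt_mul_of_pos_right hlt (by positivity)
    have h4 : (p:ℝ) * (b*M) < (a:ℝ)*q*M + q := by
      have e1 : (p:ℝ)/q * (q*(b*M)) = (p:ℝ) * (b*M) := by
        field_simp
      have e2 : ((a:ℝ)/b + 1/((b:ℝ)*M)) * (q*(b*M)) = (a:ℝ)*q*M + q := by field_simp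
      rw [e1, e2] at h3
      exact h3
    have h5 : p * (b*M) < a*q*M + q := by exact_mod_cast h4
    have h6 : q * (a*M+1) = a*q*M + q := by ring
    rw [h6]
    exact le_of_lt h5
  -- main chain
  set P := a*M+1 with hPdef
  set Q := b*M with hQdef
  set X := F (ZMod P) (fractionGraph P Q) with hXdef
  set A := F (ZMod a) (fractionGraph a b) with hAdef
  have hstep1 : F (ZMod p) (fractionGraph p q) ≤ X :=
    hmono _ _ _ _ ⟨_, mon_cohom (p := p) (q := q) (P := P) (Q := Q) hq (Nat.mul_pos (by omega) (by omega)) hfrac⟩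
  obtain ⟨f, hf⟩ := big_cohom a b M hb hab hM3
  have hstep2 : F (Fin P → ZMod P) (strongPow (fractionGraph P Q) P) ≤
      F ((Fin P → ZMod a) × (Fin P × {s : Finset (Fin P) // s.card ≤ a}))
        (strongProd (strongPow (fractionGraph a b) P)
          (⊥ : SimpleGraph (Fin P × {s : Finset (Fin P) // s.card ≤ a}))) :=
    hmono _ _ _ _ ⟨f, hf⟩
  rw [F_pow F hiso hmul hnorm (ZMod P) (fractionGraph P Q) P,
    hmul _ _ _ _, F_pow F hiso hmul hnorm (ZMod a) (fractionGraph a b) P,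
    F_bot F hiso hnorm] at hstep2
  -- card bound
  have hcard : (Fintype.card (Fin P × {s : Finset (Fin P) // s.card ≤ a}) : ℝ) ≤
      (((P:ℕ):ℝ)+1)^(a+2) := by
    have h1 : Fintype.card (Fin P × {s : Finset (Fin P) // s.card ≤ a})
        = P * Fintype.card {s : Finset (Fin P) // s.card ≤ a} := by
      rw [Fintype.card_prod, Fintype.card_fin]
    have h2 := card_small_subsets P a
    have h3 : Fintype.card (Fin P × {s : Finset (Fin P) // s.card ≤ a}) ≤ (P+1)^(a+2) := by
      calc Fintype.card (Fin P × {s : Finset (Fin P) // s.card ≤ a})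
          = P * Fintype.card {s : Finset (Fin P) // s.card ≤ a} := h1
      _ ≤ P * ((a+1) * (P+1)^a) := Nat.mul_le_mul_left _ h2
      _ ≤ (P+1) * ((P+1) * (P+1)^a) := by
          have haP : a ≤ a*M := Nat.le_mul_of_pos_right a (by omega)
          apply Nat.mul_le_mul (by omega)
          apply Nat.mul_le_mul_right
          omega
      _ = (P+1)^(a+2) := by ring
    calc (Fintype.card (Fin P × {s : Finset (Fin P) // s.card ≤ a}) : ℝ)
        ≤ ((((P+1)^(a+2) : ℕ)):ℝ) := by exact_mod_cast h3
    _ = (((P:ℕ):ℝ)+1)^(a+2) := by push_cast; ring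
  have hA1 : 1 ≤ A := F_ge_one F hnorm hmono (ZMod a) ⟨0⟩ (fractionGraph a b)
  have hX1 : 1 ≤ X := F_ge_one F hnorm hmono (ZMod P) ⟨0⟩ (fractionGraph P Q)
  have hAa : A ≤ a := by
    have h := F_le_card F hnorm hmono (ZMod a) (fractionGraph a b)
    rw [ZMod.card] at h
    exact h
  -- combine
  have hXP : X^P ≤ (A * (1+ε'))^P := by
    calc X^P ≤ A^P * (Fintype.card (Fin P × {s : Finset (Fin P) // s.card ≤ a}) : ℝ) := hstep2
    _ ≤ A^P * (1+ε')^P := by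
        apply mul_le_mul_of_nonneg_left _ (by positivity)
        exact le_trans hcard hgrow
    _ = (A * (1+ε'))^P := by rw [mul_pow]
  have hXle : X ≤ A * (1+ε') := by
    have hPne : P ≠ 0 := by omega
    exact (pow_le_pow_iff_left₀ (by linarith) (by positivity) hPne).mp hXP
  have hfinal : F (ZMod p) (fractionGraph p q) - A ≤ A * ε' := by
    have : F (ZMod p) (fractionGraph p q) ≤ A * (1+ε') := le_trans hstep1 hXle
    nlinarith
  have hlast : A * ε' < ε := by
    have h1 : A * ε' ≤ (a:ℝ) * ε' := by
      apply mul_le_mul_of_nonneg_right hAa (le_of_lt hε'pos)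
    have h2 : (a:ℝ) * ε' = ε / 2 := by
      rw [hε'def]
      have ha0 : (a:ℝ) ≠ 0 := by
        have : (2:ℝ) ≤ a := by exact_mod_cast ha2
        linarith
      field_simp
    linarith
  show F (ZMod p) (fractionGraph p q) - A < ε
  linarith

end RightCont

/-- Right-continuity on fraction graphs: any normalized, additive, multiplicative,
cohomomorphism-monotone, isomorphism-invariant real function on finite simple graphs
is right-continuous along fraction graphs. -/
theorem rightContinuous_on_fractionGraphs
    (F : ∀ (V : Type) [Fintype V], SimpleGraph V → ℝ)
    (hiso : ∀ (V W : Type) [Fintype V] [Fintype W]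
      (G : SimpleGraph V) (H : SimpleGraph W), Nonempty (G ≃g H) → F V G = F W H)
    (hadd : ∀ (V W : Type) [Fintype V] [Fintype W]
      (G : SimpleGraph V) (H : SimpleGraph W),
      F (V ⊕ W) (disjUnion G H) = F V G + F W H)
    (hmul : ∀ (V W : Type) [Fintype V] [Fintype W]
      (G : SimpleGraph V) (H : SimpleGraph W),
      F (V × W) (strongProd G H) = F V G * F W H)
    (hnorm : ∀ n : ℕ, F (Fin n) ⊥ = n)
    (hmono : ∀ (V W : Type) [Fintype V] [Fintype W]
      (G : SimpleGraph V) (H : SimpleGraph W),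
      (∃ f : V → W, IsCohom G H f) → F V G ≤ F W H)
    (a b : ℕ) (hb : 1 ≤ b) (hab : 2 * b ≤ a) (ε : ℝ) (hε : 0 < ε) :
    ∃ δ : ℝ, 0 < δ ∧ ∀ p q : ℕ, ∀ _hq : 1 ≤ q, ∀ _hpq : 2 * q ≤ p,
      (a : ℝ) / (b : ℝ) ≤ (p : ℝ) / (q : ℝ) → (p : ℝ) / (q : ℝ) < (a : ℝ) / (b : ℝ) + δ →
      @F (ZMod p) (@ZMod.fintype p ⟨by omega⟩) (fractionGraph p q) -
        @F (ZMod a) (@ZMod.fintype a ⟨by omega⟩) (fractionGraph a b) < ε := by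
  obtain ⟨δ, hδ, h⟩ := rightContinuous_on_fractionGraphs' F hiso hmul hnorm hmono a b hb hab ε hε
  exact ⟨δ, hδ, fun p q hq hpq h1 h2 => h p q hq hpq h1 h2 _ _⟩
end

section
/- Let r = p/q ≥ 2 be a rational number (p, q natural numbers, q ≥ 1). Then there is no cohomomorphism from the open circle graph E_{p/q}^o to the closed circle graph E_{p/q}^c; in particular, E_{p/q}^c and E_{p/q}^o are not equivalent under cohomomorphism. -/
open SimpleGraph

lemma abs_ge_of_dvd {P c n : ℤ} (hc0 : 0 ≤ c) (hcP : c < P) (h : P ∣ n - c) :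
    min c (P - c) ≤ |n| := by
  obtain ⟨t, ht⟩ := h
  have hn : n = c + P * t := by linarith
  have hP : 0 < P := lt_of_le_of_lt hc0 hcP
  rcases lt_trichotomy t 0 with h1 | h1 | h1
  · have ht1 : t ≤ -1 := by omega
    have : P * t ≤ P * (-1) := mul_le_mul_of_nonneg_left ht1 hP.le
    refine le_abs.mpr (Or.inr ?_)
    have : n ≤ -(P - c) := by linarith
    calc min c (P - c) ≤ P - c := min_le_right _ _
    _ ≤ -n := by linarith
  · refine le_abs.mpr (Or.inl ?_)
    simp only [h1, mul_zero, add_zero] at hn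
    calc min c (P - c) ≤ c := min_le_left _ _
    _ ≤ n := by omega
  · have ht1 : (1:ℤ) ≤ t := h1
    have : P * 1 ≤ P * t := mul_le_mul_of_nonneg_left ht1 hP.le
    refine le_abs.mpr (Or.inl ?_)
    calc min c (P - c) ≤ P - c := min_le_right _ _
    _ ≤ n := by linarith

section alpha
variable {p : ℕ}

private def stepSet (A : Finset (ZMod p)) : ℕ → Finset (ZMod p)
  | 0 => A
  | (k+1) => stepSet A k ∪ (stepSet A k).image (· + 1)

private lemma stepSet_mono (A : Finset (ZMod p)) (k : ℕ) : stepSet A k ⊆ stepSet A (k+1) :=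
  Finset.subset_union_left

private lemma stepSet_nonempty (A : Finset (ZMod p)) (hA : A.Nonempty) (k : ℕ) :
    (stepSet A k).Nonempty := by
  induction k with
  | zero => exact hA
  | succ k ih => exact ih.mono (stepSet_mono A k)

private lemma mem_stepSet (A : Finset (ZMod p)) (k : ℕ) :
    ∀ x ∈ stepSet A k, ∃ a ∈ A, ∃ j ≤ k, x = a + (j : ZMod p) := by
  induction k with
  | zero => exact fun x hx => ⟨x, hx, 0, le_refl _, by simp⟩
  | succ k ih =>
    intro x hx
    rcases Finset.mem_union.mp hx with h | h
    · obtain ⟨a, ha, j, hj, rfl⟩ := ih x h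
      exact ⟨a, ha, j, hj.trans (Nat.le_succ _), rfl⟩
    · obtain ⟨y, hy, rfl⟩ := Finset.mem_image.mp h
      obtain ⟨a, ha, j, hj, rfl⟩ := ih y hy
      exact ⟨a, ha, j + 1, by omega, by push_cast; ring⟩

private lemma closed_shift_univ [NeZero p] (B : Finset (ZMod p)) (hB : B.Nonempty)
    (h : ∀ b ∈ B, b + 1 ∈ B) : B = Finset.univ := by
  obtain ⟨a, ha⟩ := hB
  have key : ∀ n : ℕ, a + (n : ZMod p) ∈ B := by
    intro n
    induction n with
    | zero => simpa using ha
    | succ n ih => push_cast; rw [← add_assoc]; exact h _ ih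
  ext x
  simp only [Finset.mem_univ, iff_true]
  have : a + (((x - a).val : ℕ) : ZMod p) = x := by
    rw [ZMod.natCast_rightInverse (x - a)]; ring
  rw [← this]; exact key _

private lemma stepSet_card (A : Finset (ZMod p)) [NeZero p] (hA : A.Nonempty) (K : ℕ)
    (hU : stepSet A K ≠ Finset.univ) : A.card + K ≤ (stepSet A K).card := by
  induction K with
  | zero => simp [stepSet]
  | succ K ih =>
    have hsub : stepSet A K ⊆ stepSet A (K+1) := stepSet_mono A K
    have hUK : stepSet A K ≠ Finset.univ := by
      intro h
      exact hU (Finset.eq_univ_iff_forall.mpr fun x => hsub (h ▸ Finset.mem_univ x))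
    have hgrow : (stepSet A K).card + 1 ≤ (stepSet A (K+1)).card := by
      by_cases hcl : (stepSet A K).image (· + 1) ⊆ stepSet A K
      · exfalso
        exact hUK (closed_shift_univ _ (stepSet_nonempty A hA K)
          (fun b hb => hcl (Finset.mem_image.mpr ⟨b, hb, rfl⟩)))
      · obtain ⟨b, hb, hbn⟩ := Finset.not_subset.mp hcl
        have : insert b (stepSet A K) ⊆ stepSet A (K+1) := by
          intro y hy
          rcases Finset.mem_insert.mp hy with rfl | hy
          · exact Finset.mem_union.mpr (Or.inr hb)
          · exact hsub hy
        calc (stepSet A K).card + 1 = (insert b (stepSet A K)).card :=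
              (Finset.card_insert_of_notMem hbn).symm
        _ ≤ _ := Finset.card_le_card this
    have := ih hUK
    omega
end alpha

private lemma alpha_bound (p q : ℕ) (hq : 1 ≤ q) (hp : 2*q ≤ p) (S : Finset (ZMod p))
    (hS : ∀ s ∈ S, ∀ s' ∈ S, s ≠ s' → ¬ (q ≤ min (s - s').val (p - (s - s').val))) :
    S.card ≤ q := by
  haveI : NeZero p := ⟨by omega⟩
  rcases S.eq_empty_or_nonempty with rfl | hSne
  · simp
  set A : Finset (ZMod p) := S.image (· + (q : ZMod p)) with hA
  have hAne : A.Nonempty := hSne.image _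
  have hAcard : A.card = S.card := Finset.card_image_of_injective _ (add_left_injective _)
  set U := stepSet A (p - 2*q) with hUdef
  have memU : ∀ x ∈ U, ∃ s ∈ S, ∃ j ≤ p - 2*q, x = s + ((q + j : ℕ) : ZMod p) := by
    intro x hx
    obtain ⟨a, ha, j, hj, rfl⟩ := mem_stepSet A _ x hx
    obtain ⟨s, hs, rfl⟩ := Finset.mem_image.mp ha
    exact ⟨s, hs, j, hj, by push_cast; ring⟩
  have disj : ∀ x ∈ U, x ∉ S := by
    intro x hx hxS
    obtain ⟨s, hs, j, hj, rfl⟩ := memU x hx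
    have hlt : q + j < p := by omega
    have hval : ((q + j : ℕ) : ZMod p).val = q + j := ZMod.val_natCast_of_lt hlt
    have hsub : (s + ((q + j : ℕ) : ZMod p) - s) = ((q + j : ℕ) : ZMod p) := by ring
    by_cases hxs : s + ((q + j : ℕ) : ZMod p) = s
    · rw [add_eq_left] at hxs
      have : ((q + j : ℕ) : ZMod p).val = 0 := by rw [hxs]; simp [ZMod.val_zero]
      omega
    · refine hS _ hxS s hs hxs ?_
      rw [hsub, hval]
      exact le_min (by omega) (by omega)
  have hUne : U ≠ Finset.univ := by
    intro h
    obtain ⟨s, hs⟩ := hSne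
    exact disj s (h ▸ Finset.mem_univ s) hs
  have hUcard : A.card + (p - 2*q) ≤ U.card := stepSet_card A hAne _ hUne
  have hdisj : Disjoint S U := Finset.disjoint_left.mpr (fun a ha hb => disj a hb ha)
  have htot : S.card + U.card ≤ p := by
    have := Finset.card_le_card (Finset.subset_univ (S ∪ U))
    rw [Finset.card_union_of_disjoint hdisj] at this
    simpa [ZMod.card] using this
  omega


private lemma coe_int_eq_zero (T : ℤ) : (((T : ℝ)) : AddCircle (1:ℝ)) = 0 := by
  refine (QuotientAddGroup.eq_zero_iff _).mpr ?_
  exact ⟨T, by simp⟩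

private lemma dist_coe_le (a b : ℝ) :
    dist ((a : AddCircle (1:ℝ))) ((b : AddCircle (1:ℝ))) ≤ |a - b| := by
  rw [dist_eq_norm, ← AddCircle.coe_sub]
  simpa [Real.norm_eq_abs] using QuotientAddGroup.norm_mk_le_norm (S := AddSubgroup.zmultiples (1:ℝ)) (m := a - b)

private lemma grid_count (y : AddCircle (1:ℝ)) (ρ : ℝ) (hρ : 0 < ρ) (h2ρ : 2 * ρ < 1)
    (N : ℕ) (hN : 0 < N) :
    2 * ρ * N - 1 ≤ (((Finset.range N).filter
      (fun (m : ℕ) => dist y (((m : ℝ) / (N : ℝ) : ℝ) : AddCircle (1:ℝ)) ≤ ρ)).card : ℝ) := by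
  induction y using QuotientAddGroup.induction_on with
  | H a =>
  have hNR : (0:ℝ) < N := by exact_mod_cast hN
  set lo : ℤ := ⌈(N:ℝ) * (a - ρ)⌉ with hlo
  set hi : ℤ := ⌊(N:ℝ) * (a + ρ)⌋ with hhi
  set J : Finset ℤ := Finset.Icc lo hi with hJ
  have hJcard : 2 * ρ * N - 1 ≤ (J.card : ℝ) := by
    have h1 : (N:ℝ) * (a + ρ) - 1 < (hi : ℝ) := Int.sub_one_lt_floor _
    have h2 : (lo : ℝ) < (N:ℝ) * (a - ρ) + 1 := Int.ceil_lt_add_one _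
    have h3 : J.card = (hi + 1 - lo).toNat := Int.card_Icc _ _
    have h4 : (hi + 1 - lo : ℤ) ≤ ((hi + 1 - lo).toNat : ℤ) := Int.self_le_toNat _
    have h5 : ((hi + 1 - lo : ℤ) : ℝ) ≤ (J.card : ℝ) := by
      rw [h3]; exact_mod_cast h4
    push_cast at h5
    nlinarith
  refine le_trans hJcard ?_
  have : J.card ≤ ((Finset.range N).filter
      (fun (m : ℕ) => dist ((a : AddCircle (1:ℝ))) (((m : ℝ) / (N : ℝ) : ℝ) : AddCircle (1:ℝ)) ≤ ρ)).card := by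
    apply Finset.card_le_card_of_injOn (fun j => (j % (N:ℤ)).toNat)
    · intro j hj
      obtain ⟨hj1, hj2⟩ := Finset.mem_Icc.mp hj
      have hNne : (N:ℤ) ≠ 0 := by exact_mod_cast hN.ne'
      have hmod0 : 0 ≤ j % (N:ℤ) := Int.emod_nonneg j hNne
      have hmodlt : j % (N:ℤ) < N := Int.emod_lt_of_pos j (by exact_mod_cast hN)
      rw [Finset.mem_coe, Finset.mem_filter]
      beta_reduce
      refine ⟨Finset.mem_range.mpr (by omega), ?_⟩
      set m : ℕ := (j % (N:ℤ)).toNat with hm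
      have hmz : ((m : ℤ)) = j % (N:ℤ) := Int.toNat_of_nonneg hmod0
      set T : ℤ := j / (N:ℤ) with hT
      have hjm : (j : ℤ) = (N:ℤ) * T + m := by rw [hmz]; exact (Int.mul_ediv_add_emod j N).symm
      have hcoe : (((m : ℝ) / (N:ℝ) : ℝ) : AddCircle (1:ℝ)) = (((j : ℝ) / (N:ℝ) : ℝ) : AddCircle (1:ℝ)) := by
        have hjr : (j:ℝ) = (N:ℝ) * (T:ℝ) + (m:ℝ) := by exact_mod_cast hjm
        have : ((j : ℝ) / (N:ℝ)) = (m : ℝ) / (N:ℝ) + (T : ℝ) := by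
          field_simp
          linarith
        rw [this, AddCircle.coe_add, coe_int_eq_zero, add_zero]
      rw [hcoe]
      have l1 : (N:ℝ) * (a - ρ) ≤ (j:ℝ) := by
        have := Int.ceil_le.mp (le_refl lo)
        calc (N:ℝ) * (a - ρ) ≤ (lo : ℝ) := Int.le_ceil _
        _ ≤ (j : ℝ) := by exact_mod_cast hj1
      have l2 : (j:ℝ) ≤ (N:ℝ) * (a + ρ) := by
        calc (j:ℝ) ≤ (hi : ℝ) := by exact_mod_cast hj2
        _ ≤ (N:ℝ) * (a + ρ) := Int.floor_le _
      refine le_trans (dist_coe_le a ((j:ℝ)/(N:ℝ))) ?_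
      have hdiv1 : a - ρ ≤ (j:ℝ)/(N:ℝ) := (le_div_iff₀ hNR).mpr (by linarith)
      have hdiv2 : (j:ℝ)/(N:ℝ) ≤ a + ρ := (div_le_iff₀ hNR).mpr (by linarith)
      rw [abs_le]
      exact ⟨by linarith, by linarith⟩
    · intro j hj j' hj' hjj'
      obtain ⟨hj1, hj2⟩ := Finset.mem_Icc.mp hj
      obtain ⟨hj'1, hj'2⟩ := Finset.mem_Icc.mp hj'
      have hNne : (N:ℤ) ≠ 0 := by exact_mod_cast hN.ne'
      have e0 : (j % (N:ℤ)).toNat = (j' % (N:ℤ)).toNat := hjj'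
      have e1 : j % (N:ℤ) = j' % (N:ℤ) := by
        have h0 : 0 ≤ j % (N:ℤ) := Int.emod_nonneg j hNne
        have h0' : 0 ≤ j' % (N:ℤ) := Int.emod_nonneg j' hNne
        omega
      have hdvd : (N:ℤ) ∣ j - j' := by
        rw [Int.dvd_iff_emod_eq_zero, Int.sub_emod, e1, sub_self, Int.zero_emod]
      have hrange : |(j:ℝ) - (j':ℝ)| < (N:ℝ) := by
        have b1 : (lo : ℝ) ≥ (N:ℝ) * (a - ρ) := Int.le_ceil _
        have b2 : (hi : ℝ) ≤ (N:ℝ) * (a + ρ) := Int.floor_le _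
        have c1 : (j:ℝ) ≤ (hi:ℝ) := by exact_mod_cast hj2
        have c2 : (lo:ℝ) ≤ (j:ℝ) := by exact_mod_cast hj1
        have c3 : (j':ℝ) ≤ (hi:ℝ) := by exact_mod_cast hj'2
        have c4 : (lo:ℝ) ≤ (j':ℝ) := by exact_mod_cast hj'1
        rw [abs_lt]
        constructor <;> nlinarith
      have : |j - j'| < (N:ℤ) := by exact_mod_cast (by push_cast; exact hrange : |((j - j' : ℤ) : ℝ)| < (N:ℝ))
      obtain ⟨t, ht⟩ := hdvd
      rcases eq_or_ne t 0 with rfl | htne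
      · omega
      · exfalso
        have : (N:ℤ) * 1 ≤ |(N:ℤ) * t| := by
          rw [abs_mul]
          have : (1:ℤ) ≤ |t| := Int.one_le_abs htne
          have hN1 : (0:ℤ) ≤ |(N:ℤ)| := abs_nonneg _
          calc (N:ℤ) * 1 = (N:ℤ) := mul_one _
          _ ≤ |(N:ℤ)| := le_abs_self _
          _ ≤ |(N:ℤ)| * |t| := le_mul_of_one_le_right hN1 ‹(1:ℤ) ≤ |t|›
        rw [← ht] at this
        omega
  exact_mod_cast this

private lemma dist_grid_ge (p : ℕ) [NeZero p] (i j : ZMod p) (m : ℕ)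
    (hm : m ≤ min (i - j).val (p - (i - j).val)) :
    (m : ℝ) / p ≤ dist ((((i.val : ℕ) : ℝ) / p : ℝ) : AddCircle (1:ℝ))
      ((((j.val : ℕ) : ℝ) / p : ℝ) : AddCircle (1:ℝ)) := by
  have hp0 : 0 < p := Nat.pos_of_ne_zero (NeZero.ne p)
  have hpR : (0:ℝ) < p := by exact_mod_cast hp0
  set k : ℤ := (i.val : ℤ) - (j.val : ℤ) with hk
  have hsub : ((i.val : ℝ) / p - (j.val : ℝ) / p) = (k : ℝ) / p := by
    rw [hk]; push_cast; ring
  rw [dist_eq_norm, ← AddCircle.coe_sub, hsub, AddCircle.norm_eq]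
  simp only [inv_one, one_mul, mul_one]
  set t : ℤ := round ((k : ℝ) / p) with htdef
  set n : ℤ := k - p * t with hn
  have habs : (k : ℝ) / p - t = (n : ℝ) / p := by
    push_cast [hn]; field_simp
  rw [habs, abs_div, abs_of_pos hpR]
  set c : ℤ := ((i - j).val : ℤ) with hc
  have hdvd : (p : ℤ) ∣ n - c := by
    have h1 : ((n - c : ℤ) : ZMod p) = 0 := by
      push_cast [hn, hk, hc]
      rw [ZMod.natCast_rightInverse i, ZMod.natCast_rightInverse j,
        ZMod.natCast_rightInverse (i - j), ZMod.natCast_self]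
      ring
    exact (ZMod.intCast_zmod_eq_zero_iff_dvd _ _).mp h1
  have hc0 : 0 ≤ c := Int.natCast_nonneg _
  have hcP : c < (p:ℤ) := by rw [hc]; exact_mod_cast ZMod.val_lt (i - j)
  have hkey : min c ((p:ℤ) - c) ≤ |n| := abs_ge_of_dvd hc0 hcP hdvd
  have hval : (i - j).val < p := ZMod.val_lt _
  have hm' : (m : ℤ) ≤ min c ((p:ℤ) - c) := by
    simp only [le_min_iff] at hm ⊢
    omega
  have : (m : ℝ) ≤ |(n:ℝ)| := by
    have : (m:ℤ) ≤ |n| := le_trans hm' hkey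
    calc (m:ℝ) = ((m:ℤ) : ℝ) := by push_cast; ring
    _ ≤ ((|n| : ℤ) : ℝ) := by exact_mod_cast this
    _ = |(n:ℝ)| := by push_cast; ring
  exact (div_le_div_iff_of_pos_right hpR).mpr this

set_option maxHeartbeats 1000000 in
/-- For rational `r = p/q ≥ 2`, there is no cohomomorphism from `E_{p/q}^o` to `E_{p/q}^c`;
in particular, `E_{p/q}^c` and `E_{p/q}^o` are not equivalent under cohomomorphism. -/
theorem open_closed_circleGraph_not_equivalent_rational (p q : ℕ)
    (hq : 1 ≤ q) (hp : 2 * q ≤ p) :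
    (¬ ∃ f : AddCircle (1 : ℝ) → AddCircle (1 : ℝ),
        IsCohom (openCircleGraph ((p : ℝ) / (q : ℝ))) (closedCircleGraph ((p : ℝ) / (q : ℝ))) f) ∧
    ¬ ((∃ f : AddCircle (1 : ℝ) → AddCircle (1 : ℝ),
          IsCohom (closedCircleGraph ((p : ℝ) / (q : ℝ))) (openCircleGraph ((p : ℝ) / (q : ℝ))) f) ∧
       (∃ g : AddCircle (1 : ℝ) → AddCircle (1 : ℝ),
          IsCohom (openCircleGraph ((p : ℝ) / (q : ℝ))) (closedCircleGraph ((p : ℝ) / (q : ℝ))) g)) := by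

  have hp2 : 2 ≤ p := by omega
  haveI : NeZero p := ⟨by omega⟩
  have hp0R : (0:ℝ) < p := by exact_mod_cast (by omega : 0 < p)
  have hq0R : (0:ℝ) < q := by exact_mod_cast hq
  set r : ℝ := (p : ℝ) / (q : ℝ) with hr
  set t : ℝ := (q : ℝ) / (p : ℝ) with htt
  have h1r : 1 / r = t := one_div_div _ _
  have ht0 : 0 < t := by positivity
  have ht2 : 2 * t ≤ 1 := by
    have h2q : (2*(q:ℝ)) ≤ p := by exact_mod_cast hp
    rw [htt, show 2*((q:ℝ)/p) = (2*(q:ℝ))/p by ring, div_le_one hp0R]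
    exact h2q
  have key : ¬ ∃ f : AddCircle (1 : ℝ) → AddCircle (1 : ℝ),
      IsCohom (openCircleGraph r) (closedCircleGraph r) f := by
    rintro ⟨f, hf⟩
    set x : ZMod p → AddCircle (1:ℝ) := fun i => (((i.val : ℕ) : ℝ) / p : ℝ) with hx
    have hxdef : ∀ k : ZMod p, x k = ((((k.val : ℕ) : ℝ) / p : ℝ) : AddCircle (1:ℝ)) :=
      fun k => rfl
    set Y : ZMod p → AddCircle (1:ℝ) := fun i => f (x i) with hY
    have hcon : ∀ i j : ZMod p, q ≤ min (i - j).val (p - (i - j).val) →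
        Y i ≠ Y j ∧ t < dist (Y i) (Y j) := by
      intro i j hmin
      have hij : i ≠ j := by
        rintro rfl
        simp only [sub_self, ZMod.val_zero, Nat.sub_zero, min_eq_left (Nat.zero_le p)] at hmin
        omega
      have hxne : x i ≠ x j := by
        have h1 : (1:ℝ)/p ≤ dist (x i) (x j) := by
          have hij' : i - j ≠ 0 := sub_ne_zero.mpr hij
          have hv : (i - j).val ≠ 0 := fun h =>
            hij' ((ZMod.val_eq_zero _).mp h)
          have hvlt : (i - j).val < p := ZMod.val_lt _
          have hge1 : 1 ≤ min (i - j).val (p - (i - j).val) :=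
            le_min (by omega) (by omega)
          have := dist_grid_ge p i j 1 hge1
          rw [hxdef i, hxdef j]
          exact_mod_cast this
        intro h
        rw [h, _root_.dist_self] at h1
        have : (0:ℝ) < 1/p := by positivity
        linarith
      have hdist : 1/r ≤ dist (x i) (x j) := by
        rw [h1r, htt, hxdef i, hxdef j]
        exact dist_grid_ge p i j q hmin
      have hnadj : ¬ (openCircleGraph r).Adj (x i) (x j) := by
        intro hA
        exact absurd (show x i ≠ x j ∧ dist (x i) (x j) < 1 / r from hA).2 (not_lt.mpr hdist)
      obtain ⟨hfne, hfnadj⟩ := hf (x i) (x j) hxne hnadj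
      refine ⟨hfne, ?_⟩
      have hnle : ¬ (dist (Y i) (Y j) ≤ 1/r) := fun hle => hfnadj (⟨hfne, hle⟩ : Y i ≠ Y j ∧ dist (Y i) (Y j) ≤ 1/r)
      rw [h1r] at hnle
      exact lt_of_not_ge hnle
    -- the finite set of constrained pairs and minimal constrained distance
    set Cpairs : Finset (ZMod p × ZMod p) :=
      Finset.univ.filter (fun pr : ZMod p × ZMod p =>
        q ≤ min (pr.1 - pr.2).val (p - (pr.1 - pr.2).val)) with hC
    have hqval : ((q : ZMod p) - 0).val = q := by
      rw [sub_zero]; exact ZMod.val_natCast_of_lt (by omega)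
    have hCne : Cpairs.Nonempty := by
      refine ⟨((q : ZMod p), 0), Finset.mem_filter.mpr ⟨Finset.mem_univ _, ?_⟩⟩
      rw [hqval]
      exact le_min (le_refl _) (by omega)
    set D : Finset ℝ := Cpairs.image (fun pr => dist (Y pr.1) (Y pr.2)) with hD
    have hDne : D.Nonempty := hCne.image _
    set ε : ℝ := D.min' hDne with hε
    have hεgt : t < ε := by
      obtain ⟨pr, hpr, hpr2⟩ := Finset.mem_image.mp (D.min'_mem hDne)
      have h2 := (hcon pr.1 pr.2 (Finset.mem_filter.mp hpr).2).2
      rw [hpr2] at h2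
      exact h2
    have hεle : ∀ i j : ZMod p, q ≤ min (i - j).val (p - (i - j).val) →
        ε ≤ dist (Y i) (Y j) := by
      intro i j hij
      exact D.min'_le _ (Finset.mem_image.mpr
        ⟨(i, j), Finset.mem_filter.mpr ⟨Finset.mem_univ _, hij⟩, rfl⟩)
    set δ : ℝ := min (ε - t) t / 2 with hδ
    have hδ0 : 0 < δ := by
      rw [hδ]
      have : 0 < min (ε - t) t := lt_min (by linarith) ht0
      linarith
    set L : ℝ := t + δ with hL
    have hLlt1 : L < 1 := by
      have : δ ≤ t / 2 := by
        rw [hδ]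
        have := min_le_right (ε - t) t
        linarith
      have : L ≤ 3 * t / 2 := by rw [hL]; linarith
      linarith
    have hLltε : L < ε := by
      have h1 : δ ≤ (ε - t)/2 := by
        rw [hδ]
        have := min_le_left (ε - t) t
        linarith
      rw [hL]; linarith
    set N : ℕ := ⌈1/δ⌉₊ + 1 with hN
    have hNpos : 0 < N := by omega
    have hNR : (0:ℝ) < N := by exact_mod_cast hNpos
    have hδN : 1 < δ * N := by
      have h1 : (1:ℝ)/δ ≤ ⌈1/δ⌉₊ := Nat.le_ceil _
      have h2 : ((⌈1/δ⌉₊ : ℕ) : ℝ) < N := by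
        rw [hN]; push_cast; linarith
      have : 1/δ < (N:ℝ) := by linarith
      rw [div_lt_iff₀ hδ0] at this
      linarith [mul_comm δ (N:ℝ)]
    classical
    -- per-ball bound
    have hball : ∀ m : ℕ, (Finset.univ.filter (fun i : ZMod p => dist (Y i) ((((m:ℕ) : ℝ) / (N : ℝ) : ℝ) : AddCircle (1:ℝ)) ≤ L/2)).card ≤ q := by
      intro m
      apply alpha_bound p q hq hp
      intro s hs s' hs' hne hmin
      have h1 := (Finset.mem_filter.mp hs).2
      have h2 := (Finset.mem_filter.mp hs').2
      have htri : dist (Y s) (Y s') ≤ L := by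
        calc dist (Y s) (Y s')
            ≤ dist (Y s) ((((m:ℕ) : ℝ) / (N : ℝ) : ℝ) : AddCircle (1:ℝ))
              + dist (Y s') ((((m:ℕ) : ℝ) / (N : ℝ) : ℝ) : AddCircle (1:ℝ)) :=
              dist_triangle_right _ _ _
        _ ≤ L/2 + L/2 := add_le_add h1 h2
        _ = L := by ring
      have := hεle s s' hmin
      linarith
    -- per-point bound
    have hpoint : ∀ i : ZMod p, (L * N - 1 : ℝ) ≤
        (((Finset.range N).filter (fun m : ℕ => dist (Y i) ((((m:ℕ) : ℝ) / (N : ℝ) : ℝ) : AddCircle (1:ℝ)) ≤ L/2)).card : ℝ) := by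
      intro i
      have := grid_count (Y i) (L/2) (by linarith [ht0, hδ0]) (by linarith) N hNpos
      have harg : 2 * (L/2) * N - 1 = L * N - 1 := by ring
      rw [harg] at this
      exact this
    have hswap : ∑ m ∈ Finset.range N, (Finset.univ.filter (fun i : ZMod p => dist (Y i) ((((m:ℕ) : ℝ) / (N : ℝ) : ℝ) : AddCircle (1:ℝ)) ≤ L/2)).card
        = ∑ i : ZMod p, ((Finset.range N).filter (fun m : ℕ => dist (Y i) ((((m:ℕ) : ℝ) / (N : ℝ) : ℝ) : AddCircle (1:ℝ)) ≤ L/2)).card := by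
      simp_rw [Finset.card_filter]
      exact Finset.sum_comm
    have hub : (∑ m ∈ Finset.range N, (Finset.univ.filter (fun i : ZMod p => dist (Y i) ((((m:ℕ) : ℝ) / (N : ℝ) : ℝ) : AddCircle (1:ℝ)) ≤ L/2)).card) ≤ N * q := by
      calc _ ≤ ∑ _m ∈ Finset.range N, q := Finset.sum_le_sum (fun m _ => hball m)
      _ = N * q := by rw [Finset.sum_const, Finset.card_range, smul_eq_mul]
    have hlb : (p : ℝ) * (L * N - 1) ≤
        ((∑ i : ZMod p, ((Finset.range N).filter (fun m : ℕ => dist (Y i) ((((m:ℕ) : ℝ) / (N : ℝ) : ℝ) : AddCircle (1:ℝ)) ≤ L/2)).card : ℕ) : ℝ) := by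
      rw [Nat.cast_sum]
      calc (p:ℝ) * (L * N - 1) = ∑ _i : ZMod p, (L * N - 1) := by
            rw [Finset.sum_const, Finset.card_univ, ZMod.card, nsmul_eq_mul]
      _ ≤ ∑ i : ZMod p, (((Finset.range N).filter (fun m : ℕ => dist (Y i) ((((m:ℕ) : ℝ) / (N : ℝ) : ℝ) : AddCircle (1:ℝ)) ≤ L/2)).card : ℝ) :=
            Finset.sum_le_sum (fun i _ => hpoint i)
    have hfinal : (p : ℝ) * (L * N - 1) ≤ (N : ℝ) * q := by
      calc (p : ℝ) * (L * N - 1) ≤ _ := hlb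
      _ = ((∑ m ∈ Finset.range N, (Finset.univ.filter (fun i : ZMod p => dist (Y i) ((((m:ℕ) : ℝ) / (N : ℝ) : ℝ) : AddCircle (1:ℝ)) ≤ L/2)).card : ℕ) : ℝ) := by
            rw [hswap]
      _ ≤ ((N * q : ℕ) : ℝ) := by exact_mod_cast hub
      _ = (N : ℝ) * q := by push_cast; ring
    have hpt : (p : ℝ) * t = q := by
      rw [htt]; field_simp
    have hexp : (p:ℝ) * (L * N - 1) = (q:ℝ) * N + (p:ℝ) * δ * N - p := by
      rw [hL]
      linear_combination (N:ℝ) * hpt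
    nlinarith [hfinal, hδN, hp0R, hexp]
  refine ⟨key, ?_⟩
  rintro ⟨-, hB⟩
  exact key hB
end
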